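/- arXiv:1305.5227 — 6 statements merged into one kernel-verified Lean document; each statement's English description precedes it below -/
import Mathlib

section
/- For every integer n ≥ 3, any set of at least (2n-4 choose n-2) + 1 points in the plane in general position (no three collinear) contains n points in convex position. -/
/-!
After a shear we may assume that the points have distinct x-coordinates. A *cup* (a set whose chord
slopes increase from left to right) is in convex position: through each of its points passes a
line leaving the other points strictly above it; a *cap* is a cup turned upside down. The
cup–cap theorem says that more than `C(a + b - 4, a - 2)` points contain an `a`-cup or a `b`-cap.
By Pascal's rule it suffices to split `S` into the set `E` of right endpoints of `(a - 1)`-cups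
and its complement: the complement contains no `(a - 1)`-cup, and a `(b - 1)`-cap in `E` starts
at the right end of an `(a - 1)`-cup; comparing the slopes of the two chords through this
junction point extends either the cup or the cap by one point.
-/

/-- A finite planar point set is in general position if no three of its points are collinear. -/
def GenPos (S : Finset (ℝ × ℝ)) : Prop :=
  ∀ T ⊆ S, T.card = 3 → ¬ Collinear ℝ (T : Set (ℝ × ℝ))

/-- A finite planar point set is in convex position if no point lies in the
convex hull of the others. -/
def ConvexPos (S : Finset (ℝ × ℝ)) : Prop :=
  ∀ p ∈ S, p ∉ convexHull ℝ ((S.erase p : Finset (ℝ × ℝ)) : Set (ℝ × ℝ))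

open Finset

noncomputable def chordSlope (p q : ℝ × ℝ) : ℝ := (q.2 - p.2) / (q.1 - p.1)

section ChordSlope

variable {a b c : ℝ × ℝ}

theorem chordSlope_mul_add (hab : a.1 < b.1) (hbc : b.1 < c.1) :
    (c.1 - a.1) * chordSlope a c
      = (b.1 - a.1) * chordSlope a b + (c.1 - b.1) * chordSlope b c := by
  unfold chordSlope
  field_simp [(sub_pos.2 hab).ne', (sub_pos.2 hbc).ne', (sub_pos.2 (hab.trans hbc)).ne']
  ring

theorem chordSlope_lt_chordSlope_of_lt (hab : a.1 < b.1) (hbc : b.1 < c.1)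
    (h : chordSlope a b < chordSlope b c) : chordSlope a b < chordSlope a c := by
  have := chordSlope_mul_add hab hbc
  nlinarith

theorem chordSlope_lt_chordSlope_of_gt (hab : a.1 < b.1) (hbc : b.1 < c.1)
    (h : chordSlope b c < chordSlope a b) : chordSlope b c < chordSlope a c := by
  have := chordSlope_mul_add hab hbc
  nlinarith

theorem collinear_of_chordSlope_eq (hab : a.1 ≠ b.1) (hbc : b.1 ≠ c.1)
    (h : chordSlope a b = chordSlope b c) : Collinear ℝ ({a, b, c} : Set (ℝ × ℝ)) := by
  rw [collinear_iff_of_mem (Set.mem_insert a _)]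
  refine ⟨(1, chordSlope a b), ?_⟩
  have hb : b.2 = a.2 + (b.1 - a.1) * chordSlope a b := by
    unfold chordSlope; field_simp [sub_ne_zero.2 hab.symm]; ring
  have hc : c.2 = b.2 + (c.1 - b.1) * chordSlope a b := by
    rw [h]; unfold chordSlope; field_simp [sub_ne_zero.2 hbc.symm]; ring
  simp only [Set.mem_insert_iff, Set.mem_singleton_iff]
  rintro p (rfl | rfl | rfl)
  · exact ⟨0, by simp⟩
  · exact ⟨p.1 - a.1, Prod.ext (by simp) (by simp; linarith)⟩
  · exact ⟨p.1 - a.1, Prod.ext (by simp) (by simp; linarith)⟩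

theorem chordSlope_neg_neg (p q : ℝ × ℝ) : chordSlope (-p) (-q) = chordSlope q p := by
  simp only [chordSlope, Prod.fst_neg, Prod.snd_neg, neg_sub_neg]

end ChordSlope

theorem card_eq_three_of_fst_lt {p q r : ℝ × ℝ} (hpq : p.1 < q.1) (hqr : q.1 < r.1) :
    ({p, q, r} : Finset (ℝ × ℝ)).card = 3 :=
  card_eq_three.2 ⟨p, q, r, fun h => hpq.ne (by rw [h]), fun h => (hpq.trans hqr).ne (by rw [h]),
    fun h => hqr.ne (by rw [h]), rfl⟩

theorem GenPos.mono {S T : Finset (ℝ × ℝ)} (hS : GenPos S) (hT : T ⊆ S) : GenPos T :=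
  fun U hU => hS U (hU.trans hT)

theorem GenPos.chordSlope_ne {S : Finset (ℝ × ℝ)} (hS : GenPos S) {p q r : ℝ × ℝ}
    (hp : p ∈ S) (hq : q ∈ S) (hr : r ∈ S) (hpq : p.1 < q.1) (hqr : q.1 < r.1) :
    chordSlope p q ≠ chordSlope q r := fun h =>
  hS {p, q, r} (by simp [insert_subset_iff, hp, hq, hr]) (card_eq_three_of_fst_lt hpq hqr)
    (by simpa using collinear_of_chordSlope_eq hpq.ne hqr.ne h)

def IsCup (A : Finset (ℝ × ℝ)) : Prop :=
  ∀ p ∈ A, ∀ q ∈ A, ∀ r ∈ A, p.1 < q.1 → q.1 < r.1 → chordSlope p q < chordSlope q r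

def IsCap (A : Finset (ℝ × ℝ)) : Prop :=
  ∀ p ∈ A, ∀ q ∈ A, ∀ r ∈ A, p.1 < q.1 → q.1 < r.1 → chordSlope q r < chordSlope p q

theorem three_le_card_of_fst_lt {A : Finset (ℝ × ℝ)} {p q r : ℝ × ℝ} (hp : p ∈ A) (hq : q ∈ A)
    (hr : r ∈ A) (hpq : p.1 < q.1) (hqr : q.1 < r.1) : 3 ≤ A.card :=
  card_eq_three_of_fst_lt hpq hqr ▸ card_le_card (by simp [insert_subset_iff, hp, hq, hr])

theorem isCup_of_card_le_two {A : Finset (ℝ × ℝ)} (hA : A.card ≤ 2) : IsCup A :=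
  fun _ hp _ hq _ hr hpq hqr => absurd (three_le_card_of_fst_lt hp hq hr hpq hqr) (by omega)

theorem isCap_of_card_le_two {A : Finset (ℝ × ℝ)} (hA : A.card ≤ 2) : IsCap A :=
  fun _ hp _ hq _ hr hpq hqr => absurd (three_le_card_of_fst_lt hp hq hr hpq hqr) (by omega)

section Extend

variable {A : Finset (ℝ × ℝ)} {m : ℝ × ℝ}

theorem IsCup.insert_right (hA : IsCup A) (hm : m ∈ A) (hmax : ∀ a ∈ A, a ≠ m → a.1 < m.1)
    {r : ℝ × ℝ} (hmr : m.1 < r.1) (h : ∀ p ∈ A, p ≠ m → chordSlope p m < chordSlope m r) :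
    IsCup (insert r A) := by
  have hrA : ∀ a ∈ A, a.1 < r.1 := fun a ha =>
    if ham : a = m then ham ▸ hmr else (hmax a ha ham).trans hmr
  have key : ∀ p ∈ A, ∀ q ∈ A, p.1 < q.1 → chordSlope p q < chordSlope q r := by
    intro p hp q hq hpq
    by_cases hqm : q = m
    · exact hqm ▸ h p hp (by rintro rfl; exact hpq.ne (by rw [hqm]))
    · have hqm' := hmax q hq hqm
      calc chordSlope p q < chordSlope q m := hA p hp q hq m hm hpq hqm'
        _ < chordSlope q r := chordSlope_lt_chordSlope_of_lt hqm' hmr (h q hq hqm)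
  intro p hp q hq s hs hpq hqs
  rw [mem_insert] at hp hq hs
  have hqA : q ∈ A := hq.resolve_left fun hqr => by
    rcases hs with rfl | hs
    · exact hqs.ne (by rw [hqr])
    · exact (hrA s hs).not_gt (hqr ▸ hqs)
  have hpA : p ∈ A := hp.resolve_left fun hpr => (hrA q hqA).not_gt (hpr ▸ hpq)
  rcases hs with rfl | hs
  · exact key p hpA q hqA hpq
  · exact hA p hpA q hqA s hs hpq hqs

theorem IsCap.insert_left (hA : IsCap A) (hm : m ∈ A) (hmin : ∀ a ∈ A, a ≠ m → m.1 < a.1)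
    {l : ℝ × ℝ} (hlm : l.1 < m.1) (h : ∀ q ∈ A, q ≠ m → chordSlope m q < chordSlope l m) :
    IsCap (insert l A) := by
  have hlA : ∀ a ∈ A, l.1 < a.1 := fun a ha =>
    if ham : a = m then ham ▸ hlm else hlm.trans (hmin a ha ham)
  have key : ∀ q ∈ A, ∀ s ∈ A, q.1 < s.1 → chordSlope q s < chordSlope l q := by
    intro q hq s hs hqs
    by_cases hqm : q = m
    · exact hqm ▸ h s hs (by rintro rfl; exact hqs.ne (by rw [hqm]))
    · have hmq := hmin q hq hqm
      calc chordSlope q s < chordSlope m q := hA m hm q hq s hs hmq hqs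
        _ < chordSlope l q := chordSlope_lt_chordSlope_of_gt hlm hmq (h q hq hqm)
  intro p hp q hq s hs hpq hqs
  rw [mem_insert] at hp hq hs
  have hqA : q ∈ A := hq.resolve_left fun hql => by
    rcases hp with rfl | hp
    · exact hpq.ne (by rw [hql])
    · exact (hlA p hp).not_gt (hql ▸ hpq)
  have hsA : s ∈ A := hs.resolve_left fun hsl => (hlA q hqA).not_gt (hsl ▸ hqs)
  rcases hp with rfl | hp
  · exact key q hqA s hsA hqs
  · exact hA p hp q hqA s hsA hpq hqs

end Extend

theorem notMem_convexHull_of_lt {E : Type*} [AddCommGroup E] [Module ℝ E] (f : E →ₗ[ℝ] ℝ)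
    {s : Set E} {p : E} (h : ∀ q ∈ s, f q < f p) : p ∉ convexHull ℝ s := fun hp =>
  lt_irrefl (f p) (convexHull_min h (convex_halfSpace_lt f.isLinear (f p)) hp)

theorem ConvexPos.image {T : Finset (ℝ × ℝ)} (hT : ConvexPos T) (e : (ℝ × ℝ) ≃ₗ[ℝ] ℝ × ℝ) :
    ConvexPos (T.image e) := by
  simp only [ConvexPos, forall_mem_image]
  intro p hp hmem
  have himage := e.toLinearMap.image_convexHull (T.erase p : Set (ℝ × ℝ))
  rw [LinearEquiv.coe_coe] at himage
  rw [← image_erase e.injective, coe_image, ← himage] at hmem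
  obtain ⟨q, hq, hqp⟩ := hmem
  exact hT p hp (e.injective hqp ▸ hq)

theorem IsCup.convexPos {T : Finset (ℝ × ℝ)} (hx : Set.InjOn Prod.fst (T : Set (ℝ × ℝ)))
    (hT : IsCup T) : ConvexPos T := by
  intro p hp
  -- `T \ {p}` lies strictly above the line through `p` of slope `s`.
  obtain ⟨s, hleft, hright⟩ := Finset.exists_between'
    ((T.filter (·.1 < p.1)).image (chordSlope · p)) ((T.filter (p.1 < ·.1)).image (chordSlope p))
    (by
      simp only [forall_mem_image, mem_filter]
      exact fun q ⟨hq, hqp⟩ r ⟨hr, hpr⟩ => hT q hq p hp r hr hqp hpr)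
  refine notMem_convexHull_of_lt (s • LinearMap.fst ℝ ℝ ℝ - LinearMap.snd ℝ ℝ ℝ) fun q hq => ?_
  obtain ⟨hqp, hqT⟩ := mem_erase.1 hq
  simp only [LinearMap.sub_apply, LinearMap.smul_apply, LinearMap.fst_apply, LinearMap.snd_apply,
    smul_eq_mul]
  have hne : q.1 ≠ p.1 := fun h => hqp (hx hqT hp h)
  rcases hne.lt_or_gt with h | h
  · have := hleft _ (mem_image_of_mem _ (mem_filter.2 ⟨hqT, h⟩))
    rw [chordSlope, div_lt_iff₀ (sub_pos.2 h)] at this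
    linarith
  · have := hright _ (mem_image_of_mem _ (mem_filter.2 ⟨hqT, h⟩))
    rw [chordSlope, lt_div_iff₀ (sub_pos.2 h)] at this
    linarith

theorem IsCap.isCup_image_neg {T : Finset (ℝ × ℝ)} (hT : IsCap T) : IsCup (T.image (-·)) := by
  simp only [IsCup, forall_mem_image, Prod.fst_neg, neg_lt_neg_iff, chordSlope_neg_neg]
  exact fun p hp q hq r hr hqp hrq => hT r hr q hq p hp hrq hqp

theorem IsCap.convexPos {T : Finset (ℝ × ℝ)} (hx : Set.InjOn Prod.fst (T : Set (ℝ × ℝ)))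
    (hT : IsCap T) : ConvexPos T := by
  have hx' : Set.InjOn Prod.fst (T.image (-·) : Set (ℝ × ℝ)) := by
    simp only [coe_image, Set.InjOn, Set.forall_mem_image, Prod.fst_neg, neg_inj]
    exact fun p hp q hq h => hx hp hq h
  simpa [image_image, Function.comp_def] using
    (hT.isCup_image_neg.convexPos hx').image (LinearEquiv.neg ℝ)

theorem exists_insert_isCup_or_insert_isCap {C Q : Finset (ℝ × ℝ)} {m : ℝ × ℝ} (hC : IsCup C)
    (hQ : IsCap Q) (hmC : m ∈ C) (hmQ : m ∈ Q) (hCm : ∀ a ∈ C, a ≠ m → a.1 < m.1)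
    (hQm : ∀ a ∈ Q, a ≠ m → m.1 < a.1) (hC2 : C.Nontrivial) (hQ2 : Q.Nontrivial)
    (hgen : GenPos (C ∪ Q)) :
    (∃ r ∈ Q, r ∉ C ∧ IsCup (insert r C)) ∨ (∃ l ∈ C, l ∉ Q ∧ IsCap (insert l Q)) := by
  obtain ⟨l, hl, hlmax⟩ := (C.erase m).exists_max_image (chordSlope · m) (hC2.erase_nonempty)
  obtain ⟨r, hr, hrmax⟩ := (Q.erase m).exists_max_image (chordSlope m) (hQ2.erase_nonempty)
  obtain ⟨hlm, hlC⟩ := mem_erase.1 hl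
  obtain ⟨hrm, hrQ⟩ := mem_erase.1 hr
  have hlm' := hCm l hlC hlm
  have hmr := hQm r hrQ hrm
  rcases (hgen.chordSlope_ne (mem_union_left _ hlC) (mem_union_left _ hmC)
    (mem_union_right _ hrQ) hlm' hmr).lt_or_gt with h | h
  · refine .inl ⟨r, hrQ, fun hrC => lt_asymm hmr (hCm r hrC hrm), ?_⟩
    exact hC.insert_right hmC hCm hmr fun p hp hpm => (hlmax p (mem_erase.2 ⟨hpm, hp⟩)).trans_lt h
  · refine .inr ⟨l, hlC, fun hlQ => lt_asymm hlm' (hQm l hlQ hlm), ?_⟩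
    exact hQ.insert_left hmQ hQm hlm' fun q hq hqm => (hrmax q (mem_erase.2 ⟨hqm, hq⟩)).trans_lt h

def HasCupOrCap (S : Finset (ℝ × ℝ)) (a b : ℕ) : Prop :=
  ∃ C ⊆ S, (C.card = a ∧ IsCup C) ∨ (C.card = b ∧ IsCap C)

open Classical in
noncomputable def cupEnds (S : Finset (ℝ × ℝ)) (k : ℕ) : Finset (ℝ × ℝ) :=
  S.filter fun p => ∃ C ⊆ S, C.card = k ∧ IsCup C ∧ p ∈ C ∧ ∀ q ∈ C, q.1 ≤ p.1

theorem mem_cupEnds {S : Finset (ℝ × ℝ)} {k : ℕ} {p : ℝ × ℝ} :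
    p ∈ cupEnds S k ↔ p ∈ S ∧ ∃ C ⊆ S, C.card = k ∧ IsCup C ∧ p ∈ C ∧ ∀ q ∈ C, q.1 ≤ p.1 := by
  classical
  exact mem_filter

theorem cupEnds_subset (S : Finset (ℝ × ℝ)) (k : ℕ) : cupEnds S k ⊆ S :=
  fun _ hp => (mem_cupEnds.1 hp).1

theorem IsCup.exists_mem_cupEnds {S C : Finset (ℝ × ℝ)} (hC : IsCup C) (hCS : C ⊆ S)
    (hne : C.Nonempty) : ∃ p ∈ C, p ∈ cupEnds S C.card := by
  obtain ⟨p, hp, hmax⟩ := C.exists_max_image Prod.fst hne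
  exact ⟨p, hp, mem_cupEnds.2 ⟨hCS hp, C, hCS, rfl, hC, hp, hmax⟩⟩

theorem HasCupOrCap.of_sdiff_cupEnds {S : Finset (ℝ × ℝ)} {a b : ℕ} (ha : 0 < a)
    (h : HasCupOrCap (S \ cupEnds S a) a b) : HasCupOrCap S (a + 1) b := by
  obtain ⟨C, hCS, ⟨rfl, hC⟩ | hC⟩ := h
  · obtain ⟨p, hpC, hpE⟩ := hC.exists_mem_cupEnds (hCS.trans sdiff_subset) (card_pos.1 ha)
    exact absurd hpE (mem_sdiff.1 (hCS hpC)).2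
  · exact ⟨C, hCS.trans sdiff_subset, .inr hC⟩

theorem HasCupOrCap.of_cupEnds {S : Finset (ℝ × ℝ)} {a b : ℕ}
    (hx : Set.InjOn Prod.fst (S : Set (ℝ × ℝ))) (hS : GenPos S) (ha : 2 ≤ a) (hb : 2 ≤ b)
    (h : HasCupOrCap (cupEnds S a) (a + 1) b) : HasCupOrCap S (a + 1) (b + 1) := by
  obtain ⟨Q, hQE, hQ | ⟨rfl, hQ⟩⟩ := h
  · exact ⟨Q, hQE.trans (cupEnds_subset S a), .inl hQ⟩
  have hQS := hQE.trans (cupEnds_subset S a)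
  obtain ⟨m, hmQ, hmin⟩ := Q.exists_min_image Prod.fst (card_pos.1 (by omega))
  obtain ⟨-, C, hCS, rfl, hC, hmC, hmax⟩ := mem_cupEnds.1 (hQE hmQ)
  have hfst_ne {p q} (hp : p ∈ S) (hq : q ∈ S) (hpq : p ≠ q) : p.1 ≠ q.1 :=
    fun h => hpq (hx hp hq h)
  rcases exists_insert_isCup_or_insert_isCap hC hQ hmC hmQ
      (fun c hc hcm => (hmax c hc).lt_of_ne (hfst_ne (hCS hc) (hCS hmC) hcm))
      (fun q hq hqm => (hmin q hq).lt_of_ne (hfst_ne (hQS hmQ) (hQS hq) (Ne.symm hqm)))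
      (one_lt_card_iff_nontrivial.1 (by omega)) (one_lt_card_iff_nontrivial.1 (by omega))
      (hS.mono (union_subset hCS hQS)) with ⟨r, hrQ, hrC, hcup⟩ | ⟨l, hlC, hlQ, hcap⟩
  · exact ⟨insert r C, insert_subset (hQS hrQ) hCS, .inl ⟨card_insert_of_notMem hrC, hcup⟩⟩
  · exact ⟨insert l Q, insert_subset (hCS hlC) hQS, .inr ⟨card_insert_of_notMem hlQ, hcap⟩⟩

/-- The cup–cap theorem for `a = i + 2` and `b = j + 2`, indexed so that the bound
`C(a + b - 4, a - 2)` needs no truncated subtraction. -/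
theorem hasCupOrCap_of_choose_lt (i j : ℕ) {S : Finset (ℝ × ℝ)}
    (hx : Set.InjOn Prod.fst (S : Set (ℝ × ℝ))) (hS : GenPos S)
    (hcard : (i + j).choose i < S.card) : HasCupOrCap S (i + 2) (j + 2) := by
  induction i generalizing j S with
  | zero =>
    obtain ⟨C, hCS, hC⟩ := exists_subset_card_eq (show 1 < S.card by simpa using hcard)
    exact ⟨C, hCS, .inl ⟨hC, isCup_of_card_le_two hC.le⟩⟩
  | succ i ihi =>
    induction j generalizing S with
    | zero =>
      obtain ⟨C, hCS, hC⟩ := exists_subset_card_eq (show 1 < S.card by simpa using hcard)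
      exact ⟨C, hCS, .inr ⟨hC, isCap_of_card_le_two hC.le⟩⟩
    | succ j ihj =>
      have hsplit := card_sdiff_add_card_eq_card (cupEnds_subset S (i + 2))
      have hpascal : (i + 1 + (j + 1)).choose (i + 1)
          = (i + (j + 1)).choose i + (i + 1 + j).choose (i + 1) := by
        rw [show i + 1 + (j + 1) = i + (j + 1) + 1 by omega, Nat.choose_succ_succ,
          show i + (j + 1) = i + 1 + j by omega]
      by_cases h : (i + (j + 1)).choose i < (S \ cupEnds S (i + 2)).card
      · exact .of_sdiff_cupEnds (by omega)
          (ihi (j + 1) (hx.mono sdiff_subset) (hS.mono sdiff_subset) h)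
      · have hE := cupEnds_subset S (i + 2)
        exact .of_cupEnds hx hS (by omega) (by omega)
          (ihj (hx.mono hE) (hS.mono hE) (by omega))

theorem HasCupOrCap.exists_convexPos {S : Finset (ℝ × ℝ)} {a : ℕ}
    (hx : Set.InjOn Prod.fst (S : Set (ℝ × ℝ))) (h : HasCupOrCap S a a) :
    ∃ T ⊆ S, T.card = a ∧ ConvexPos T := by
  obtain ⟨T, hTS, ⟨hTa, hT⟩ | ⟨hTa, hT⟩⟩ := h
  · exact ⟨T, hTS, hTa, hT.convexPos (hx.mono hTS)⟩
  · exact ⟨T, hTS, hTa, hT.convexPos (hx.mono hTS)⟩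

universe u in
theorem Collinear.affine_image {k P₁ P₂ : Type*} {V₁ V₂ : Type u} [DivisionRing k]
    [AddCommGroup V₁] [Module k V₁] [AddTorsor V₁ P₁] [AddCommGroup V₂] [Module k V₂]
    [AddTorsor V₂ P₂] {s : Set P₁} (h : Collinear k s) (f : P₁ →ᵃ[k] P₂) : Collinear k (f '' s) := by
  rw [Collinear, ← f.map_vectorSpan]
  exact (rank_map_le f.linear (vectorSpan k s)).trans h

theorem GenPos.image {S : Finset (ℝ × ℝ)} (hS : GenPos S) (e : (ℝ × ℝ) ≃ₗ[ℝ] ℝ × ℝ) :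
    GenPos (S.image e) := by
  intro T hT hT3 hcol
  refine hS (T.image e.symm) ?_ (by rw [card_image_of_injective _ e.symm.injective, hT3]) ?_
  · intro p hp
    obtain ⟨q, hq, rfl⟩ := mem_image.1 hp
    obtain ⟨r, hr, rfl⟩ := mem_image.1 (hT hq)
    simpa using hr
  · rw [coe_image]
    exact hcol.affine_image e.symm.toLinearMap.toAffineMap

/-- A shear `(x, y) ↦ (y + ε x, x)`, with `ε` avoiding the finitely many slopes between points of
`S`, separates the points of `S` by their first coordinate. -/
theorem exists_linearEquiv_injOn_fst (S : Finset (ℝ × ℝ)) :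
    ∃ e : (ℝ × ℝ) ≃ₗ[ℝ] ℝ × ℝ, Set.InjOn Prod.fst (S.image e : Set (ℝ × ℝ)) := by
  obtain ⟨ε, hε⟩ := Infinite.exists_notMem_finset
    ((S ×ˢ S).image fun pq : (ℝ × ℝ) × (ℝ × ℝ) => (pq.2.2 - pq.1.2) / (pq.1.1 - pq.2.1))
  refine ⟨((LinearEquiv.refl ℝ ℝ).skewProd (LinearEquiv.refl ℝ ℝ) (ε • LinearMap.id)).trans
    (LinearEquiv.prodComm ℝ ℝ ℝ), ?_⟩
  simp only [coe_image, Set.InjOn, Set.forall_mem_image, LinearEquiv.trans_apply,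
    LinearEquiv.skewProd_apply, LinearEquiv.prodComm_apply, Prod.fst_swap]
  intro p hp q hq h
  simp only [LinearEquiv.refl_apply, LinearMap.smul_apply, LinearMap.id_apply, smul_eq_mul] at h
  suffices p = q by rw [this]
  by_cases h1 : p.1 = q.1
  · exact Prod.ext h1 (by rw [h1] at h; linarith)
  · refine absurd (mem_image.2 ⟨(p, q), mem_product.2 ⟨hp, hq⟩, ?_⟩) hε
    field_simp [sub_ne_zero.2 h1]
    linarith

/-- Erdős–Szekeres theorem: any set of at least `C(2n-4, n-2) + 1` points in general
position in the plane contains `n` points in convex position. -/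
theorem erdos_szekeres_convex_position (n : ℕ) (hn : 3 ≤ n) (S : Finset (ℝ × ℝ))
    (hgen : GenPos S) (hcard : Nat.choose (2 * n - 4) (n - 2) + 1 ≤ S.card) :
    ∃ T ⊆ S, T.card = n ∧ ConvexPos T := by
  obtain ⟨k, rfl⟩ : ∃ k, n = k + 2 := ⟨n - 2, by omega⟩
  obtain ⟨e, he⟩ := exists_linearEquiv_injOn_fst S
  have hcard' : (k + k).choose k < (S.image e).card := by
    rw [show 2 * (k + 2) - 4 = k + k by omega, Nat.add_sub_cancel] at hcard
    rw [card_image_of_injective _ e.injective]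
    omega
  obtain ⟨T', hT'S, hT'k, hT'⟩ :=
    (hasCupOrCap_of_choose_lt k k he (hgen.image e) hcard').exists_convexPos he
  obtain ⟨T, hTS, rfl⟩ := subset_image_iff.1 hT'S
  refine ⟨T, hTS, by rwa [card_image_of_injective _ e.injective] at hT'k, ?_⟩
  simpa [image_image, Function.comp_def] using hT'.image e.symm
end

section
/- Let P be a finite set of points in the plane in general position, ordered by strictly increasing x-coordinate, such that for every pair i < j, either every triple (p_i, p_j, p_k) with k > j forms a cap, or every such triple forms a cup. If |P| ≥ n², then P contains n points in convex position (forming an n-cup or an n-cap). -/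
/-- Twice the signed area of the triangle `a b c`: positive iff `(a,b,c)` is a
counterclockwise (left) turn, negative iff a clockwise (right) turn. -/
def det2 (a b c : ℝ × ℝ) : ℝ :=
  (b.1 - a.1) * (c.2 - a.2) - (b.2 - a.2) * (c.1 - a.1)

/-!
Call a pair `i < j` a cap pair if every later point lies below the line `p i p j` and a cup pair
if every later point lies above it. Both relations are transitive, because of the identity
`(c.1 - b.1) * det2 a c d = (d.1 - c.1) * det2 a b c + (c.1 - a.1) * det2 b c d`, and by
hypothesis every pair is a cap pair or a cup pair. Labelling each point by the lengths of the
longest cap chain and cup chain ending at it is then injective (Mirsky's argument), so among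
`n²` points one of the two chains has `n` points. A chain of either kind is an `n`-cap or `n`-cup,
and such a point set is in convex position: the extreme points are cut off by vertical lines and
every other point by the line through its two neighbours.
-/

open Finset

section Heights

variable {α : Type*} (r : α → α → Prop)

def chainLengths (x : α) : Set ℕ :=
  {m | ∃ l : List α, (l ++ [x]).Pairwise r ∧ l.length = m}

noncomputable def relHeight (x : α) : ℕ :=
  sSup (chainLengths r x)

variable {r} [Fintype α]

lemma bddAbove_chainLengths (hirr : ∀ x, ¬ r x x) (x : α) : BddAbove (chainLengths r x) := by
  refine ⟨Fintype.card α, ?_⟩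
  rintro _ ⟨l, hl, rfl⟩
  have hnodup : (l ++ [x]).Nodup := hl.imp fun {a _} h => by rintro rfl; exact hirr a h
  have := hnodup.length_le_card
  simp only [List.length_append, List.length_singleton] at this
  omega

lemma exists_chain_relHeight (hirr : ∀ x, ¬ r x x) (x : α) :
    ∃ l : List α, (l ++ [x]).Pairwise r ∧ l.length = relHeight r x :=
  Nat.sSup_mem (s := chainLengths r x) ⟨0, [], by simp, rfl⟩ (bddAbove_chainLengths hirr x)

lemma relHeight_lt_relHeight (hirr : ∀ x, ¬ r x x) (htrans : ∀ x y z, r x y → r y z → r x z)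
    {x y : α} (hxy : r x y) : relHeight r x < relHeight r y := by
  obtain ⟨l, hl, hlen⟩ := exists_chain_relHeight hirr x
  have hext : (l ++ [x] ++ [y]).Pairwise r := by
    refine List.pairwise_append.2 ⟨hl, List.pairwise_singleton _ _, ?_⟩
    simp only [List.mem_singleton, forall_eq]
    intro z hz
    rcases List.mem_append.1 hz with hz | hz
    · exact htrans _ _ _ (List.pairwise_append.1 hl |>.2.2 z hz x (by simp)) hxy
    · rwa [List.mem_singleton.1 hz]
  have := le_csSup (bddAbove_chainLengths hirr y) ⟨l ++ [x], hext, rfl⟩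
  simp only [List.length_append, List.length_singleton, hlen] at this
  exact this

lemma exists_long_chain_of_mul_lt_card {r₁ r₂ : α → α → Prop}
    (hirr₁ : ∀ x, ¬ r₁ x x) (htrans₁ : ∀ x y z, r₁ x y → r₁ y z → r₁ x z)
    (hirr₂ : ∀ x, ¬ r₂ x x) (htrans₂ : ∀ x y z, r₂ x y → r₂ y z → r₂ x z)
    (hcomp : ∀ x y, x ≠ y → r₁ x y ∨ r₁ y x ∨ r₂ x y ∨ r₂ y x)
    {a b : ℕ} (hcard : a * b < Fintype.card α) :
    (∃ l : List α, l.Pairwise r₁ ∧ a < l.length) ∨ ∃ l : List α, l.Pairwise r₂ ∧ b < l.length := by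
  classical
  obtain ⟨x, hx⟩ : ∃ x, a ≤ relHeight r₁ x ∨ b ≤ relHeight r₂ x := by
    by_contra! hsmall
    have hinj : Set.InjOn (fun x => (relHeight r₁ x, relHeight r₂ x)) (univ : Finset α) := by
      intro x _ y _ hxy
      simp only [Prod.mk.injEq] at hxy
      by_contra hne
      rcases hcomp x y hne with h | h | h | h
      · exact (relHeight_lt_relHeight hirr₁ htrans₁ h).ne hxy.1
      · exact (relHeight_lt_relHeight hirr₁ htrans₁ h).ne' hxy.1
      · exact (relHeight_lt_relHeight hirr₂ htrans₂ h).ne hxy.2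
      · exact (relHeight_lt_relHeight hirr₂ htrans₂ h).ne' hxy.2
    have hmaps : Set.MapsTo (fun x => (relHeight r₁ x, relHeight r₂ x)) (univ : Finset α)
        (range a ×ˢ range b : Finset (ℕ × ℕ)) := fun x _ => by
      simpa using hsmall x
    have := card_le_card_of_injOn _ hmaps hinj
    simp only [card_univ, card_product, card_range] at this
    omega
  rcases hx with hx | hx
  · obtain ⟨l, hl, hlen⟩ := exists_chain_relHeight hirr₁ x
    exact .inl ⟨l ++ [x], hl, by rw [List.length_append, List.length_singleton]; omega⟩
  · obtain ⟨l, hl, hlen⟩ := exists_chain_relHeight hirr₂ x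
    exact .inr ⟨l ++ [x], hl, by rw [List.length_append, List.length_singleton]; omega⟩

end Heights

lemma List.Pairwise.exists_fin {α : Type*} {R : α → α → Prop} {l : List α} (hl : l.Pairwise R)
    {n : ℕ} (hn : n ≤ l.length) : ∃ f : Fin n → α, ∀ a b, a < b → R (f a) (f b) :=
  ⟨fun a => l.get (Fin.castLE hn a), fun _ _ hab => List.pairwise_iff_get.1 hl _ _ hab⟩

lemma det2_cyclic (a b c : ℝ × ℝ) : det2 a b c = det2 b c a := by
  unfold det2; ring

lemma det2_swap (a b c : ℝ × ℝ) : det2 a c b = -det2 a b c := by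
  unfold det2; ring

lemma det2_self_left (a b : ℝ × ℝ) : det2 a b a = 0 := by
  unfold det2; ring

lemma det2_self_right (a b : ℝ × ℝ) : det2 a b b = 0 := by
  unfold det2; ring

lemma det2_convex_combination (a b x y : ℝ × ℝ) {s t : ℝ} (hst : s + t = 1) :
    det2 a b (s • x + t • y) = s * det2 a b x + t * det2 a b y := by
  simp only [det2, Prod.fst_add, Prod.snd_add, Prod.smul_fst, Prod.smul_snd, smul_eq_mul]
  linear_combination (a.2 * (b.1 - a.1) - a.1 * (b.2 - a.2)) * hst

lemma convex_setOf_nonneg_mul_det2 (σ : ℝ) (a b : ℝ × ℝ) :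
    Convex ℝ {z | 0 ≤ σ * det2 a b z} := by
  intro x hx y hy s t hs ht hst
  simp only [Set.mem_ofPred, det2_convex_combination a b x y hst] at hx hy ⊢
  nlinarith [mul_nonneg hs hx, mul_nonneg ht hy]

lemma pos_mul_det2_trans {σ : ℝ} {a b c d : ℝ × ℝ} (hbc : b.1 < c.1) (hcd : c.1 < d.1)
    (hac : a.1 < c.1) (habc : 0 < σ * det2 a b c) (hbcd : 0 < σ * det2 b c d) :
    0 < σ * det2 a c d := by
  have key : (c.1 - b.1) * (σ * det2 a c d) =
      (d.1 - c.1) * (σ * det2 a b c) + (c.1 - a.1) * (σ * det2 b c d) := by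
    unfold det2; ring
  have : 0 < (c.1 - b.1) * (σ * det2 a c d) := by
    rw [key]; have := sub_pos.2 hcd; have := sub_pos.2 hac; positivity
  exact pos_of_mul_pos_right this (sub_pos.2 hbc).le

lemma convexPos_image_of_separated {ι : Type*} [Fintype ι] (q : ι → ℝ × ℝ)
    (hsep : ∀ j, ∃ C : Set (ℝ × ℝ), Convex ℝ C ∧ (∀ k, k ≠ j → q k ∈ C) ∧ q j ∉ C) :
    ConvexPos (univ.image q) := by
  intro x hx hhull
  obtain ⟨j, -, rfl⟩ := mem_image.1 hx
  obtain ⟨C, hC, hqC, hjC⟩ := hsep j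
  refine hjC (convexHull_min ?_ hC hhull)
  intro y hy
  obtain ⟨hyj, hy⟩ := mem_erase.1 hy
  obtain ⟨k, -, rfl⟩ := mem_image.1 hy
  exact hqC k fun h => hyj (h ▸ rfl)

lemma nonneg_mul_det2_of_le_or_le {n : ℕ} {q : Fin n → ℝ × ℝ} {σ : ℝ}
    (hσ : ∀ i j k, i < j → j < k → 0 < σ * det2 (q i) (q j) (q k)) {i k m : Fin n}
    (hik : i < k) (hm : m ≤ i ∨ k ≤ m) : 0 ≤ σ * det2 (q i) (q k) (q m) := by
  rcases hm with hm | hm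
  · rcases hm.lt_or_eq with hm | rfl
    · rw [← det2_cyclic]; exact (hσ m i k hm hik).le
    · rw [det2_self_left, mul_zero]
  · rcases hm.lt_or_eq with hm | rfl
    · exact (hσ i k m hik hm).le
    · rw [det2_self_right, mul_zero]

lemma convexPos_of_forall_pos_mul_det2 {n : ℕ} (q : Fin n → ℝ × ℝ)
    (hq : StrictMono fun i => (q i).1) (σ : ℝ)
    (hσ : ∀ i j k, i < j → j < k → 0 < σ * det2 (q i) (q j) (q k)) :
    ConvexPos (univ.image q) := by
  refine convexPos_image_of_separated q fun j => ?_
  by_cases hfirst : ∀ k, k ≠ j → j < k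
  · exact ⟨{z | (q j).1 < z.1}, convex_halfSpace_gt (LinearMap.fst ℝ ℝ ℝ).isLinear _,
      fun k hk => hq (hfirst k hk), lt_irrefl (q j).1⟩
  by_cases hlast : ∀ k, k ≠ j → k < j
  · exact ⟨{z | z.1 < (q j).1}, convex_halfSpace_lt (LinearMap.fst ℝ ℝ ℝ).isLinear _,
      fun k hk => hq (hlast k hk), lt_irrefl (q j).1⟩
  push Not at hfirst hlast
  obtain ⟨lo, hlo_ne, hlo⟩ := hfirst
  obtain ⟨hi, hhi_ne, hhi⟩ := hlast
  simp only [Fin.le_iff_val_le_val, ne_eq, Fin.ext_iff] at hlo_ne hlo hhi_ne hhi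
  let i : Fin n := ⟨j - 1, by omega⟩
  let k : Fin n := ⟨j + 1, by omega⟩
  have hij : i < j := by simp only [Fin.lt_def, i]; omega
  have hjk : j < k := by simp only [Fin.lt_def, k]; omega
  refine ⟨{z | 0 ≤ σ * det2 (q i) (q k) z}, convex_setOf_nonneg_mul_det2 σ _ _,
    fun m hm => nonneg_mul_det2_of_le_or_le hσ (hij.trans hjk) ?_, ?_⟩
  · simp only [Fin.le_iff_val_le_val, i, k] at hm ⊢
    omega
  · have := hσ i j k hij hjk
    rw [Set.mem_ofPred, det2_swap, not_le]
    linarith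

/-- For `σ = 1` a cup pair, for `σ = -1` a cap pair. -/
def OrientedPair {N : ℕ} (p : Fin N → ℝ × ℝ) (σ : ℝ) (i j : Fin N) : Prop :=
  i < j ∧ ∀ k, j < k → 0 < σ * det2 (p i) (p j) (p k)

lemma OrientedPair.trans {N : ℕ} {p : Fin N → ℝ × ℝ} (hx : StrictMono fun i => (p i).1)
    {σ : ℝ} {i j k : Fin N} (hij : OrientedPair p σ i j) (hjk : OrientedPair p σ j k) :
    OrientedPair p σ i k :=
  ⟨hij.1.trans hjk.1, fun m hkm =>
    pos_mul_det2_trans (hx hjk.1) (hx hkm) (hx (hij.1.trans hjk.1)) (hij.2 k hjk.1) (hjk.2 m hkm)⟩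

lemma exists_long_orientedPair_chain {N n : ℕ} {p : Fin N → ℝ × ℝ}
    (hx : StrictMono fun i => (p i).1)
    (hsame : ∀ i j : Fin N, i < j →
      (∀ k, j < k → det2 (p i) (p j) (p k) < 0) ∨ (∀ k, j < k → 0 < det2 (p i) (p j) (p k)))
    (hN : n ^ 2 ≤ N) :
    ∃ σ : ℝ, (σ = 1 ∨ σ = -1) ∧
      ∃ l : List (Fin N), l.Pairwise (OrientedPair p σ) ∧ n ≤ l.length := by
  obtain _ | m := n
  · exact ⟨1, .inl rfl, [], .nil, le_rfl⟩
  have hcomp : ∀ i j : Fin N, i < j → OrientedPair p 1 i j ∨ OrientedPair p (-1) i j :=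
    fun i j hij => (hsame i j hij).symm.imp (fun h => ⟨hij, by simpa using h⟩)
      (fun h => ⟨hij, by simpa using h⟩)
  have hcard : m * m < Fintype.card (Fin N) := by
    rw [Fintype.card_fin]; nlinarith
  rcases exists_long_chain_of_mul_lt_card (r₁ := OrientedPair p 1) (r₂ := OrientedPair p (-1))
    (fun i h => h.1.false) (fun _ _ _ => OrientedPair.trans hx)
    (fun i h => h.1.false) (fun _ _ _ => OrientedPair.trans hx)
    (fun i j hij => by rcases hij.lt_or_gt with h | h <;> have := hcomp _ _ h <;> tauto)
    hcard with ⟨l, hl, hlen⟩ | ⟨l, hl, hlen⟩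
  · exact ⟨1, .inl rfl, l, hl, hlen⟩
  · exact ⟨-1, .inr rfl, l, hl, hlen⟩

theorem cupcap_square_general (N n : ℕ) (p : Fin N → ℝ × ℝ)
    (hx : StrictMono fun i => (p i).1)
    (hsame : ∀ i j : Fin N, i < j →
      (∀ k, j < k → det2 (p i) (p j) (p k) < 0) ∨
      (∀ k, j < k → 0 < det2 (p i) (p j) (p k)))
    (hN : n ^ 2 ≤ N) :
    ∃ f : Fin n → Fin N, StrictMono f ∧
      ((∀ i j k : Fin n, i < j → j < k → 0 < det2 (p (f i)) (p (f j)) (p (f k))) ∨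
       (∀ i j k : Fin n, i < j → j < k → det2 (p (f i)) (p (f j)) (p (f k)) < 0)) ∧
      ConvexPos (Finset.univ.image (p ∘ f)) := by
  obtain ⟨σ, hσ, l, hl, hn⟩ := exists_long_orientedPair_chain hx hsame hN
  obtain ⟨f, hf⟩ := hl.exists_fin hn
  have hmono : StrictMono f := fun a b hab => (hf a b hab).1
  have hturn : ∀ i j k, i < j → j < k → 0 < σ * det2 (p (f i)) (p (f j)) (p (f k)) :=
    fun i j k hij hjk => (hf i j hij).2 _ (hmono hjk)
  refine ⟨f, hmono, ?_, convexPos_of_forall_pos_mul_det2 (p ∘ f) (hx.comp hmono) σ hturn⟩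
  rcases hσ with rfl | rfl
  · exact .inl (by simpa using hturn)
  · exact .inr (by simpa using hturn)

/-- If `P = {p 0, …, p (N-1)}` is a set of points in general position ordered by strictly
increasing `x`-coordinate such that for each pair `i < j`, either every triple
`(p i, p j, p k)` with `k > j` forms a cap (right turn) or every such triple forms a cup
(left turn), and `N ≥ n²`, then `P` contains `n` points forming an `n`-cup or an `n`-cap,
in particular `n` points in convex position. -/
theorem cupcap_square (N n : ℕ) (p : Fin N → ℝ × ℝ)
    (hx : StrictMono fun i => (p i).1)
    (hgen : GenPos (Finset.univ.image p))
    (hsame : ∀ i j : Fin N, i < j →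
      (∀ k, j < k → det2 (p i) (p j) (p k) < 0) ∨
      (∀ k, j < k → 0 < det2 (p i) (p j) (p k)))
    (hN : n ^ 2 ≤ N) :
    ∃ f : Fin n → Fin N, StrictMono f ∧
      ((∀ i j k : Fin n, i < j → j < k → 0 < det2 (p (f i)) (p (f j)) (p (f k))) ∨
       (∀ i j k : Fin n, i < j → j < k → det2 (p (f i)) (p (f j)) (p (f k)) < 0)) ∧
      ConvexPos (Finset.univ.image (p ∘ f)) :=
  cupcap_square_general N n p hx hsame hN
end

section
/- If two partial orders ≺₁ and ≺₂ on a set of at least n² elements have the property that every pair of distinct elements is comparable in ≺₁ or in ≺₂, then there exists a chain of length n with respect to one of the two partial orders. -/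
open Finset

open scoped Classical in
noncomputable def twoPO_height {α : Type*} [Fintype α] (r : α → α → Prop) (a : α) : ℕ :=
  ((Finset.univ : Finset (Finset α)).filter
    (fun s => (∀ x ∈ s, ∀ y ∈ s, r x y ∨ r y x) ∧ (∀ x ∈ s, r x a))).sup Finset.card

lemma twoPO_height_le {α : Type*} [Fintype α] {r : α → α → Prop} {a : α} {s : Finset α}
    (h1 : ∀ x ∈ s, ∀ y ∈ s, r x y ∨ r y x) (h2 : ∀ x ∈ s, r x a) :
    s.card ≤ twoPO_height r a := by
  classical
  refine le_trans (le_of_eq rfl) (Finset.le_sup ?_)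
  simp only [Finset.mem_filter, Finset.mem_univ, true_and]
  exact ⟨h1, h2⟩

lemma twoPO_height_spec {α : Type*} [Fintype α] (r : α → α → Prop) (a : α) :
    ∃ s : Finset α, (∀ x ∈ s, ∀ y ∈ s, r x y ∨ r y x) ∧ (∀ x ∈ s, r x a) ∧
      s.card = twoPO_height r a := by
  classical
  have hne : (((Finset.univ : Finset (Finset α)).filter
      (fun s => (∀ x ∈ s, ∀ y ∈ s, r x y ∨ r y x) ∧ (∀ x ∈ s, r x a)))).Nonempty := by
    refine ⟨∅, ?_⟩
    simp
  obtain ⟨s, hs, hsup⟩ := Finset.exists_mem_eq_sup _ hne Finset.card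
  simp only [Finset.mem_filter, Finset.mem_univ, true_and] at hs
  exact ⟨s, hs.1, hs.2, by rw [twoPO_height]; convert hsup.symm⟩

lemma twoPO_height_pos {α : Type*} [Fintype α] (r : α → α → Prop) [IsPartialOrder α r]
    (a : α) : 1 ≤ twoPO_height r a := by
  have := twoPO_height_le (r := r) (a := a) (s := {a})
    (by intro x hx y hy; simp only [Finset.mem_singleton] at hx hy
        rw [hx, hy]; exact Or.inl (refl_of r a))
    (by intro x hx; simp only [Finset.mem_singleton] at hx; rw [hx]; exact refl_of r a)
  simpa using this

lemma twoPO_height_lt {α : Type*} [Fintype α] (r : α → α → Prop) [IsPartialOrder α r]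
    {a b : α} (hab : r a b) (hne : a ≠ b) : twoPO_height r a < twoPO_height r b := by
  classical
  obtain ⟨s, hchain, hle, hcard⟩ := twoPO_height_spec r a
  have hb : b ∉ s := fun hb => hne (antisymm_of r hab (hle b hb))
  have h1 : ∀ x ∈ insert b s, ∀ y ∈ insert b s, r x y ∨ r y x := by
    intro x hx y hy
    rcases Finset.mem_insert.mp hx with hxb | hx <;>
      rcases Finset.mem_insert.mp hy with hyb | hy
    · rw [hxb, hyb]; exact Or.inl (refl_of r b)
    · rw [hxb]; exact Or.inr (trans_of r (hle y hy) hab)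
    · rw [hyb]; exact Or.inl (trans_of r (hle x hx) hab)
    · exact hchain x hx y hy
  have h2 : ∀ x ∈ insert b s, r x b := by
    intro x hx
    rcases Finset.mem_insert.mp hx with hxb | hx
    · rw [hxb]; exact refl_of r b
    · exact trans_of r (hle x hx) hab
  have := twoPO_height_le h1 h2
  rw [Finset.card_insert_of_notMem hb, hcard] at this
  omega

/-- Dilworth/Mirsky corollary: if two partial orders `r₁, r₂` on a finite set of at least
`n²` elements are such that every pair of distinct elements is comparable in `r₁` or in
`r₂`, then there is a chain of `n` elements with respect to one of the two orders. -/
theorem two_partial_orders_chain (α : Type*) [Fintype α] (n : ℕ)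
    (r₁ r₂ : α → α → Prop) [IsPartialOrder α r₁] [IsPartialOrder α r₂]
    (hcard : n ^ 2 ≤ Fintype.card α)
    (hcomp : ∀ a b : α, a ≠ b → r₁ a b ∨ r₁ b a ∨ r₂ a b ∨ r₂ b a) :
    ∃ c : Finset α, c.card = n ∧
      ((∀ a ∈ c, ∀ b ∈ c, r₁ a b ∨ r₁ b a) ∨ (∀ a ∈ c, ∀ b ∈ c, r₂ a b ∨ r₂ b a)) := by
  classical
  rcases Nat.eq_zero_or_pos n with rfl | hn
  · exact ⟨∅, by simp, Or.inl (by simp)⟩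
  by_cases hbig : ∃ a : α, n ≤ twoPO_height r₁ a ∨ n ≤ twoPO_height r₂ a
  · obtain ⟨a, ha⟩ := hbig
    rcases ha with ha | ha
    · obtain ⟨s, hchain, -, hcard'⟩ := twoPO_height_spec r₁ a
      obtain ⟨t, hts, htc⟩ := Finset.exists_subset_card_eq (s := s) (n := n) (by omega)
      exact ⟨t, htc, Or.inl (fun x hx y hy => hchain x (hts hx) y (hts hy))⟩
    · obtain ⟨s, hchain, -, hcard'⟩ := twoPO_height_spec r₂ a
      obtain ⟨t, hts, htc⟩ := Finset.exists_subset_card_eq (s := s) (n := n) (by omega)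
      exact ⟨t, htc, Or.inr (fun x hx y hy => hchain x (hts hx) y (hts hy))⟩
  · exfalso
    push_neg at hbig
    set f : α → ℕ × ℕ := fun a => (twoPO_height r₁ a, twoPO_height r₂ a) with hf
    have hinj : Function.Injective f := by
      intro a b hab
      by_contra hne
      have h1 : twoPO_height r₁ a = twoPO_height r₁ b := congrArg Prod.fst hab
      have h2 : twoPO_height r₂ a = twoPO_height r₂ b := congrArg Prod.snd hab
      rcases hcomp a b hne with h | h | h | h
      · exact absurd h1 (Nat.ne_of_lt (twoPO_height_lt r₁ h hne))
      · exact absurd h1.symm (Nat.ne_of_lt (twoPO_height_lt r₁ h (Ne.symm hne)))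
      · exact absurd h2 (Nat.ne_of_lt (twoPO_height_lt r₂ h hne))
      · exact absurd h2.symm (Nat.ne_of_lt (twoPO_height_lt r₂ h (Ne.symm hne)))
    have hmaps : ∀ a : α, f a ∈ (Finset.Icc 1 (n-1)) ×ˢ (Finset.Icc 1 (n-1)) := by
      intro a
      have h1 := hbig a
      have p1 := twoPO_height_pos r₁ a
      have p2 := twoPO_height_pos r₂ a
      simp only [hf, Finset.mem_product, Finset.mem_Icc]
      omega
    have hle := Finset.card_le_card_of_injOn f (fun a _ => hmaps a)
      (fun a _ b _ h => hinj h) (s := Finset.univ)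
    simp only [Finset.card_univ, Finset.card_product, Nat.card_Icc] at hle
    obtain ⟨m, rfl⟩ : ∃ m, n = m + 1 := ⟨n - 1, by omega⟩
    have hm : m + 1 - 1 + 1 - 1 = m := by omega
    rw [hm] at hle
    nlinarith [hcard, hle]
end

section
/- Let g(K_n; q) be the least N such that for every set V of N points in the plane in general position and every q-coloring of the pairs of V, there exist n points of V in convex position all of whose pairs receive the same color. Then g(K_n; q) ≤ 2^{8 q n² log₂(q n)}. -/
/-- `GeomRamseyProp n q N` : every set of at least `N` points in general position in the
plane, with any `q`-coloring of its pairs, contains `n` points in convex position all of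
whose pairs receive the same color. -/
def GeomRamseyProp (n q N : ℕ) : Prop :=
  ∀ V : Finset (ℝ × ℝ), N ≤ V.card → GenPos V →
    ∀ χ : Finset (ℝ × ℝ) → Fin q,
      ∃ T ⊆ V, T.card = n ∧ ConvexPos T ∧
        ∃ c : Fin q, ∀ e ⊆ T, e.card = 2 → χ e = c

/-!
Order the points lexicographically and extract greedily, in the manner of Erdős–Rado, points
`w₀ < w₁ < ⋯ < w_M` such that the colour of `wᵢ wⱼ` depends only on `i` and the orientation of
`wₐ w_b wⱼ` depends only on `a, b` (for `i < j`, resp. `a < b < j`). At step `i` the least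
remaining point `v` is taken, and the points `z` above it are sorted by the colour of `v z` and
by the set of earlier points `x` with `x v z` counterclockwise. Seen from `v`, these sets form a
chain, so there are at most `q (i + 1)` classes and the largest one keeps a `1 / (q M)` fraction
of the points. Pigeonholing the colours leaves `(n - 1)² + 1` indices with a common
colour; the orientation of `wₐ w_b w_M` is a 2-colouring of their pairs in which both colour
classes are transitive, so by the Erdős–Szekeres argument `n` of them have all triples oriented
alike, and points with all triples oriented alike are in convex position.
-/

open Finset

namespace GeomRamsey

/-- Twice the signed area of the triangle `p q r`; positive when `p, q, r` turn
counterclockwise. -/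
def orient (p q r : ℝ × ℝ) : ℝ := (q.1 - p.1) * (r.2 - p.2) - (q.2 - p.2) * (r.1 - p.1)

theorem orient_rotate (p q r : ℝ × ℝ) : orient q r p = orient p q r := by
  unfold orient; ring

theorem orient_swap (p q r : ℝ × ℝ) : orient p r q = -orient p q r := by
  unfold orient; ring

theorem collinear_of_orient_eq_zero {p q r : ℝ × ℝ} (h : orient p q r = 0) :
    Collinear ℝ {p, q, r} := by
  rcases eq_or_ne p q with rfl | hpq
  · simpa using collinear_pair ℝ p r
  have hv : (q.1 - p.1) ^ 2 + (q.2 - p.2) ^ 2 ≠ 0 := by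
    intro h0
    exact hpq (Prod.ext (by nlinarith) (by nlinarith))
  rw [collinear_iff_of_mem (Set.mem_insert p _)]
  refine ⟨q - p, ?_⟩
  simp only [Set.mem_insert_iff, Set.mem_singleton_iff]
  rintro x (rfl | rfl | rfl)
  · exact ⟨0, by simp⟩
  · exact ⟨1, by simp⟩
  · refine ⟨((x.1 - p.1) * (q.1 - p.1) + (x.2 - p.2) * (q.2 - p.2)) /
      ((q.1 - p.1) ^ 2 + (q.2 - p.2) ^ 2), ?_⟩
    unfold orient at h
    ext
    · simp
      field_simp
      linear_combination -(q.2 - p.2) * h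
    · simp
      field_simp
      linear_combination (q.1 - p.1) * h

theorem _root_.GenPos.orient_ne_zero {V : Finset (ℝ × ℝ)} (hV : GenPos V) {p q r : ℝ × ℝ}
    (hp : p ∈ V) (hq : q ∈ V) (hr : r ∈ V) (hpq : p ≠ q) (hpr : p ≠ r) (hqr : q ≠ r) :
    orient p q r ≠ 0 := fun h => by
  refine hV {p, q, r} ?_ (card_eq_three.2 ⟨p, q, r, hpq, hpr, hqr, rfl⟩) ?_
  · intro x hx
    simp only [mem_insert, mem_singleton] at hx
    rcases hx with rfl | rfl | rfl <;> assumption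
  · simpa using collinear_of_orient_eq_zero h

theorem orient_pos_trans {σ : ℝ} {p q r t : ℝ × ℝ} (hpq : toLex p < toLex q)
    (hqr : toLex q < toLex r) (hrt : toLex r < toLex t) (h₁ : 0 < σ * orient p q r)
    (h₂ : 0 < σ * orient q r t) : 0 < σ * orient p r t := by
  have key : orient p r t * (r.1 - q.1) =
      (t.1 - r.1) * orient p q r + (r.1 - p.1) * orient q r t := by
    unfold orient; ring
  rw [Prod.Lex.toLex_lt_toLex'] at hpq hrt
  rcases Prod.Lex.toLex_lt_toLex.1 hqr with hqr | ⟨hqr, hqr₂⟩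
  · have h₃ : σ * orient p r t * (r.1 - q.1) =
        (t.1 - r.1) * (σ * orient p q r) + (r.1 - p.1) * (σ * orient q r t) := by
      rw [mul_assoc, key]; ring
    have : 0 < (t.1 - r.1) * (σ * orient p q r) + (r.1 - p.1) * (σ * orient q r t) :=
      add_pos_of_nonneg_of_pos (mul_nonneg (by linarith [hrt.1]) h₁.le)
        (mul_pos (by linarith [hpq.1]) h₂)
    exact pos_of_mul_pos_left (h₃ ▸ this) (by linarith)
  · -- `q r` is vertical, so `p q r` and `q r t` cannot have the same orientation
    have hX : 0 ≤ (q.1 - p.1) * (r.2 - q.2) ^ 2 * (t.1 - q.1) :=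
      mul_nonneg (mul_nonneg (by linarith [hpq.1]) (sq_nonneg _)) (by linarith [hrt.1])
    have e : σ * orient p q r * (σ * orient q r t) =
        -(σ ^ 2 * ((q.1 - p.1) * (r.2 - q.2) ^ 2 * (t.1 - q.1))) := by
      unfold orient; rw [hqr]; ring
    nlinarith [mul_pos h₁ h₂, mul_nonneg (sq_nonneg σ) hX]

theorem orient_pos_around_trans {z v a b : ℝ × ℝ} (hzv : toLex z < toLex v)
    (hva : toLex v < toLex a) (hvb : toLex v < toLex b) (h₁ : 0 < orient z v a)
    (h₂ : 0 < orient v a b) : 0 < orient z v b := by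
  have key : orient z v b * (a.1 - v.1) =
      orient z v a * (b.1 - v.1) + orient v a b * (v.1 - z.1) := by
    unfold orient; ring
  rw [Prod.Lex.toLex_lt_toLex'] at hzv hva hvb
  have hzv₁ : z.1 < v.1 := by
    refine lt_of_le_of_ne hzv.1 fun h => ?_
    have : orient z v a = -((v.2 - z.2) * (a.1 - v.1)) := by unfold orient; rw [h]; ring
    nlinarith [hzv.2 h, hva.1]
  have hva₁ : v.1 < a.1 := by
    refine lt_of_le_of_ne hva.1 fun h => ?_
    have : orient v a b = -((a.2 - v.2) * (b.1 - v.1)) := by unfold orient; rw [h]; ring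
    nlinarith [hva.2 h, hvb.1]
  have : 0 < orient z v b * (a.1 - v.1) := by
    rw [key]; nlinarith [hvb.1]
  exact pos_of_mul_pos_left this (by linarith)

theorem convex_setOf_mul_orient_nonneg (σ : ℝ) (a b : ℝ × ℝ) :
    Convex ℝ {x | 0 ≤ σ * orient a b x} := by
  intro x hx y hy s t hs ht hst
  have e : σ * orient a b (s • x + t • y) = s * (σ * orient a b x) + t * (σ * orient a b y) := by
    simp only [orient, Prod.fst_add, Prod.snd_add, Prod.smul_fst, Prod.smul_snd, smul_eq_mul]
    linear_combination σ * ((b.1 - a.1) * a.2 - (b.2 - a.2) * a.1) * hst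
  show 0 ≤ σ * orient a b (s • x + t • y)
  rw [e]
  exact add_nonneg (mul_nonneg hs hx) (mul_nonneg ht hy)

theorem notMem_convexHull_of_mul_orient {σ : ℝ} {a b p : ℝ × ℝ} {S : Set (ℝ × ℝ)}
    (hp : σ * orient a b p < 0) (hS : ∀ x ∈ S, 0 ≤ σ * orient a b x) :
    p ∉ convexHull ℝ S := fun h =>
  absurd hp (not_lt.2 (convexHull_min hS (convex_setOf_mul_orient_nonneg σ a b) h))

theorem convexPos_image {n : ℕ} {w : Fin n → ℝ × ℝ} (hw : Function.Injective w) {σ : ℝ}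
    (h : ∀ i j k, i < j → j < k → 0 < σ * orient (w i) (w j) (w k)) :
    ConvexPos (univ.image w) := by
  classical
  have cyclic : ∀ i j k : Fin n, i < j ∧ j < k ∨ j < k ∧ k < i ∨ k < i ∧ i < j →
      0 < σ * orient (w i) (w j) (w k) := by
    rintro i j k (⟨hij, hjk⟩ | ⟨hjk, hki⟩ | ⟨hki, hij⟩)
    · exact h i j k hij hjk
    · rw [← orient_rotate]; exact h j k i hjk hki
    · rw [orient_rotate]; exact h k i j hki hij
  intro p hp
  obtain ⟨j, -, rfl⟩ := mem_image.1 hp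
  rw [← image_erase hw, coe_image]
  rcases lt_or_ge n 3 with hn | hn
  · intro hj
    obtain ⟨_, ⟨i, hi, rfl⟩⟩ := convexHull_nonempty_iff.1 ⟨_, hj⟩
    have hsingle : univ.erase j = {i} := by
      refine eq_singleton_iff_unique_mem.2 ⟨hi, fun k hk => ?_⟩
      simp only [mem_coe, mem_erase, mem_univ, and_true, ne_eq, Fin.ext_iff] at hi hk ⊢
      omega
    simp only [hsingle, coe_singleton, Set.image_singleton, convexHull_singleton,
      Set.mem_singleton_iff] at hj
    exact (mem_erase.1 hi).1 (hw hj).symm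
  · -- the cyclic neighbours of `j` span a line separating `w j` from the other points
    let a : Fin n := ⟨if (j : ℕ) = 0 then n - 1 else j - 1, by split_ifs <;> omega⟩
    let b : Fin n := ⟨if (j : ℕ) = n - 1 then 0 else j + 1, by split_ifs <;> omega⟩
    refine notMem_convexHull_of_mul_orient (σ := σ) (a := w a) (b := w b) ?_ ?_
    · rw [orient_swap, mul_neg, neg_lt_zero]
      apply cyclic
      simp only [Fin.lt_def, a, b]
      split_ifs <;> omega
    · rintro _ ⟨i, hi, rfl⟩
      have hij : i ≠ j := (mem_erase.1 hi).1
      by_cases hia : i = a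
      · simp [hia, orient]
      by_cases hib : i = b
      · simp [hib, orient, mul_comm]
      refine (cyclic _ _ _ ?_).le
      simp only [Fin.lt_def, a, b, ne_eq, Fin.ext_iff] at hij hia hib ⊢
      split_ifs at hia hib ⊢ <;> omega

section ErdosSzekeres

variable {α : Type*} [LinearOrder α]

def IsAscChain (R : α → α → Prop) (s : Finset α) : Prop :=
  ∀ a ∈ s, ∀ b ∈ s, a < b → R a b

open Classical in
noncomputable def chainLen (R : α → α → Prop) (I : Finset α) (a : α) : ℕ :=
  ({s ∈ I.powerset | a ∈ s ∧ (∀ x ∈ s, x ≤ a) ∧ IsAscChain R s}).sup card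

variable {R : α → α → Prop} {I : Finset α} {a b : α}

theorem card_le_chainLen {s : Finset α} (hsI : s ⊆ I) (has : a ∈ s) (hsa : ∀ x ∈ s, x ≤ a)
    (hs : IsAscChain R s) : #s ≤ chainLen R I a := by
  classical
  exact le_sup (f := card) (mem_filter.2 ⟨mem_powerset.2 hsI, has, hsa, hs⟩)

theorem exists_card_eq_chainLen (ha : a ∈ I) :
    ∃ s ⊆ I, a ∈ s ∧ (∀ x ∈ s, x ≤ a) ∧ IsAscChain R s ∧ #s = chainLen R I a := by
  classical
  have hne : ({s ∈ I.powerset | a ∈ s ∧ (∀ x ∈ s, x ≤ a) ∧ IsAscChain R s}).Nonempty :=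
    ⟨{a}, mem_filter.2 ⟨by simpa using ha, mem_singleton_self a, by simp,
      fun x hx y hy hxy => by simp_all⟩⟩
  obtain ⟨s, hs, hsup⟩ := exists_mem_eq_sup _ hne card
  obtain ⟨hsI, has, hsa, hchain⟩ := mem_filter.1 hs
  exact ⟨s, mem_powerset.1 hsI, has, hsa, hchain, by rw [chainLen, ← hsup]⟩

theorem one_le_chainLen (ha : a ∈ I) : 1 ≤ chainLen R I a := by
  obtain ⟨s, -, has, -, -, hs⟩ := exists_card_eq_chainLen (R := R) ha
  exact hs ▸ card_pos.2 ⟨a, has⟩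

theorem chainLen_lt_chainLen (hR : ∀ x y z, x < y → y < z → R x y → R y z → R x z)
    (ha : a ∈ I) (hb : b ∈ I) (hab : a < b) (hRab : R a b) :
    chainLen R I a < chainLen R I b := by
  classical
  obtain ⟨s, hsI, has, hsa, hs, hcard⟩ := exists_card_eq_chainLen (R := R) ha
  have hbs : b ∉ s := fun h => (hsa b h).not_gt hab
  have hsb : ∀ x ∈ s, x < b := fun x hx => (hsa x hx).trans_lt hab
  have hchain : IsAscChain R (insert b s) := by
    intro x hx y hy hxy
    rcases mem_insert.1 hx, mem_insert.1 hy with ⟨rfl | hxs, rfl | hys⟩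
    · exact absurd hxy (lt_irrefl _)
    · exact absurd (hsb y hys) (lt_asymm hxy)
    · rcases (hsa x hxs).lt_or_eq with hxa | rfl
      · exact hR x a y hxa hab (hs x hxs a has hxa) hRab
      · exact hRab
    · exact hs x hxs y hys hxy
  calc chainLen R I a < #(insert b s) := by rw [card_insert_of_notMem hbs, hcard]; omega
    _ ≤ chainLen R I b := card_le_chainLen (insert_subset hb hsI) (mem_insert_self b s)
        (fun x hx => (mem_insert.1 hx).elim le_of_eq fun h => (hsb x h).le) hchain

theorem chainLen_lt {n : ℕ} (hno : ∀ J ⊆ I, #J = n → ¬IsAscChain R J) : chainLen R I a < n := by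
  classical
  rcases Nat.eq_zero_or_pos n with rfl | hn
  · exact absurd (fun x hx => by simp at hx) (hno ∅ (empty_subset I) card_empty)
  refine (Finset.sup_lt_iff hn).2 fun s hs => ?_
  obtain ⟨hsI, -, -, hchain⟩ := mem_filter.1 hs
  by_contra! hns
  obtain ⟨J, hJs, hJ⟩ := exists_subset_card_eq hns
  exact hno J (hJs.trans (mem_powerset.1 hsI)) hJ
    fun x hx y hy hxy => hchain x (hJs hx) y (hJs hy) hxy

theorem exists_isAscChain_of_transitive {R' : α → α → Prop}
    (hR : ∀ x y z, x < y → y < z → R x y → R y z → R x z)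
    (hR' : ∀ x y z, x < y → y < z → R' x y → R' y z → R' x z)
    (hcover : ∀ x y, x < y → R x y ∨ R' x y) {n : ℕ} (hI : (n - 1) ^ 2 < #I) :
    ∃ J ⊆ I, #J = n ∧ (IsAscChain R J ∨ IsAscChain R' J) := by
  by_contra! hno
  have hmaps : ∀ x ∈ I, (chainLen R I x, chainLen R' I x) ∈ Ico 1 n ×ˢ Ico 1 n := fun x hx =>
    mem_product.2 ⟨mem_Ico.2 ⟨one_le_chainLen hx, chainLen_lt fun J hJ hJn => (hno J hJ hJn).1⟩,
      mem_Ico.2 ⟨one_le_chainLen hx, chainLen_lt fun J hJ hJn => (hno J hJ hJn).2⟩⟩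
  have hcard : #(Ico 1 n ×ˢ Ico 1 n) < #I := by simpa [sq] using hI
  obtain ⟨x, hx, y, hy, hne, heq⟩ := exists_ne_map_eq_of_card_lt_of_maps_to hcard hmaps
  wlog hxy : x < y generalizing x y
  · exact this y hy x hx hne.symm heq.symm (lt_of_le_of_ne (not_lt.1 hxy) hne.symm)
  simp only [Prod.mk.injEq] at heq
  rcases hcover x y hxy with h | h
  · exact (chainLen_lt_chainLen hR hx hy hxy h).ne heq.1
  · exact (chainLen_lt_chainLen hR' hx hy hxy h).ne heq.2

end ErdosSzekeres

section EndHomogeneous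

variable {α β : Type*} [LinearOrder α]

/-- `t u Q y` is the type of `y` over the point `u` and the points `Q` chosen before it. -/
def IsEndHomogeneousAt (t : α → Finset α → α → β) (A : Finset α) (u : α) : Prop :=
  ∀ y ∈ A, ∀ y' ∈ A, u < y → u < y' → t u {x ∈ A | x < u} y = t u {x ∈ A | x < u} y'

def IsEndHomogeneous (t : α → Finset α → α → β) (A : Finset α) : Prop :=
  ∀ u ∈ A, IsEndHomogeneousAt t A u

variable {t : α → Finset α → α → β} {A B P S : Finset α} {u v : α}

theorem filter_lt_eq_filter_lt (hBA : B ⊆ A) (hAB : ∀ x ∈ A, x < u → x ∈ B) :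
    {x ∈ A | x < u} = {x ∈ B | x < u} := by
  ext x
  simp only [mem_filter]
  exact ⟨fun h => ⟨hAB x h.1 h.2, h.2⟩, fun h => ⟨hBA h.1, h.2⟩⟩

theorem IsEndHomogeneousAt.mono (h : IsEndHomogeneousAt t A u) (hBA : B ⊆ A)
    (hAB : ∀ x ∈ A, x < u → x ∈ B) : IsEndHomogeneousAt t B u := by
  intro y hy y' hy' huy huy'
  rw [← filter_lt_eq_filter_lt hBA hAB]
  exact h y (hBA hy) y' (hBA hy') huy huy'

theorem isEndHomogeneousAt_insert_union (hPv : ∀ x ∈ P, x < v) (hvS : ∀ s ∈ S, v < s)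
    (htype : ∀ s ∈ S, ∀ s' ∈ S, t v P s = t v P s') :
    IsEndHomogeneousAt t (insert v P ∪ S) v := by
  have hlater : ∀ y ∈ insert v P ∪ S, v < y → y ∈ S := fun y hy hvy => by
    rcases mem_union.1 hy with hy | hy
    · rcases mem_insert.1 hy with rfl | hy
      exacts [absurd hvy (lt_irrefl y), absurd (hPv y hy) (lt_asymm hvy)]
    · exact hy
  intro y hy y' hy' hvy hvy'
  rw [filter_lt_eq_filter_lt ((subset_insert v P).trans subset_union_left)
    fun x hx hxv => ?_, filter_true_of_mem hPv]
  · exact htype y (hlater y hy hvy) y' (hlater y' hy' hvy')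
  · rcases mem_union.1 hx with hx | hx
    · exact (mem_insert.1 hx).resolve_left hxv.ne
    · exact absurd (hvS x hx) (lt_asymm hxv)

variable [DecidableEq β]

theorem exists_pow_le_card_fiber {γ : Type*} {s : Finset γ} {f : γ → β} {k m : ℕ} (hk : 0 < k)
    (hf : #(s.image f) ≤ k) (hs : (k + 1) ^ (m + 1) ≤ #s + 1) :
    ∃ c, (k + 1) ^ m ≤ #{x ∈ s | f x = c} := by
  have hpow : (k + 1) ^ (m + 1) = k * (k + 1) ^ m + (k + 1) ^ m := by ring
  have hpos : 0 < (k + 1) ^ m := by positivity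
  have hpow_le : (k + 1) ^ m ≤ k * (k + 1) ^ m := Nat.le_mul_of_pos_left _ hk
  have hcard : #(s.image f) * (k + 1) ^ m ≤ #s := by
    have := Nat.mul_le_mul_right ((k + 1) ^ m) hf
    omega
  obtain ⟨c, -, hc⟩ := exists_le_card_fiber_of_mul_le_card_of_maps_to
    (fun x hx => mem_image_of_mem f hx) (image_nonempty.2 (card_pos.1 (by omega))) hcard
  exact ⟨c, hc⟩

theorem exists_isEndHomogeneous_union {V : Finset α} {k M : ℕ} (hk : 0 < k)
    (htypes : ∀ v ∈ V, ∀ Q S : Finset α, S ⊆ V → #Q < M → (∀ x ∈ Q, x < v) →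
      (∀ s ∈ S, v < s) → #(S.image (t v Q)) ≤ k) :
    ∀ m (P S : Finset α), #P + m ≤ M → S ⊆ V → (∀ x ∈ P, ∀ s ∈ S, x < s) →
      (∀ u ∈ P, IsEndHomogeneousAt t (P ∪ S) u) → (k + 1) ^ m ≤ #S →
      ∃ A ⊆ S, #A = m + 1 ∧ IsEndHomogeneous t (P ∪ A) := by
  intro m
  induction m with
  | zero =>
    intro P S _ _ hPS hhom hS
    obtain ⟨e, he⟩ := card_pos.1 (by simpa using hS)
    refine ⟨{e}, singleton_subset_iff.2 he, card_singleton e, fun u hu => ?_⟩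
    rcases mem_union.1 hu with hu | hu
    · exact (hhom u hu).mono (union_subset_union_right (singleton_subset_iff.2 he))
        fun x hx hxu => (mem_union.1 hx).elim (mem_union_left _) fun hx =>
          absurd (hPS u hu x hx) (lt_asymm hxu)
    · intro y hy _ _ huy
      rw [mem_singleton.1 hu] at huy
      rcases mem_union.1 hy with hy | hy
      exacts [absurd (hPS y hy e he) (lt_asymm huy), absurd huy (mem_singleton.1 hy ▸ lt_irrefl e)]
  | succ m ih =>
    intro P S hPM hSV hPS hhom hS
    have hSne : S.Nonempty := card_pos.1 (lt_of_lt_of_le (by positivity) hS)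
    set v := S.min' hSne
    have hv : v ∈ S := S.min'_mem hSne
    have hvS : ∀ s ∈ S.erase v, v < s := fun s hs =>
      lt_of_le_of_ne (S.min'_le s (mem_of_mem_erase hs)) (ne_of_mem_erase hs).symm
    have hPv : ∀ x ∈ P, x < v := fun x hx => hPS x hx v hv
    obtain ⟨c, hc⟩ := exists_pow_le_card_fiber (m := m) hk
      (htypes v (hSV hv) P (S.erase v) ((erase_subset v S).trans hSV) (by omega) hPv hvS)
      (by rwa [card_erase_add_one hv])
    set S' := {s ∈ S.erase v | t v P s = c}
    have hS'S : S' ⊆ S.erase v := filter_subset _ _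
    obtain ⟨A, hAS', hA, hAhom⟩ := ih (insert v P) S' (by have := card_insert_le v P; omega)
      (hS'S.trans ((erase_subset v S).trans hSV))
      (fun x hx s hs => (mem_insert.1 hx).elim (· ▸ hvS s (hS'S hs))
        fun hx => hPS x hx s (mem_of_mem_erase (hS'S hs)))
      (fun u hu => by
        rcases mem_insert.1 hu with rfl | hu
        · exact isEndHomogeneousAt_insert_union hPv (fun s hs => hvS s (hS'S hs))
            fun s hs s' hs' => (mem_filter.1 hs).2.trans (mem_filter.1 hs').2.symm
        · refine (hhom u hu).mono (union_subset (insert_subset (mem_union_right P hv)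
            subset_union_left) ((hS'S.trans (erase_subset v S)).trans subset_union_right))
            fun x hx hxu => ?_
          rcases mem_union.1 hx with hx | hx
          · exact mem_union_left _ (mem_insert_of_mem hx)
          · exact absurd (hPS u hu x hx) (lt_asymm hxu)) hc
    have hvA : v ∉ A := fun h => (ne_of_mem_erase (hS'S (hAS' h))) rfl
    refine ⟨insert v A, insert_subset hv (hAS'.trans (hS'S.trans (erase_subset v S))),
      by rw [card_insert_of_notMem hvA, hA], by rwa [union_insert, ← insert_union]⟩

theorem exists_isEndHomogeneous {V : Finset α} {k M : ℕ} (hk : 0 < k)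
    (htypes : ∀ v ∈ V, ∀ Q S : Finset α, S ⊆ V → #Q < M → (∀ x ∈ Q, x < v) →
      (∀ s ∈ S, v < s) → #(S.image (t v Q)) ≤ k) (hV : (k + 1) ^ M ≤ #V) :
    ∃ A ⊆ V, #A = M + 1 ∧ IsEndHomogeneous t A := by
  simpa using exists_isEndHomogeneous_union hk htypes M ∅ V (by simp) subset_rfl (by simp)
    (by simp) hV

end EndHomogeneous

theorem card_le_card_add_one_of_isChain {α : Type*} {𝒞 : Finset (Finset α)} {P : Finset α}
    (hP : ∀ s ∈ 𝒞, s ⊆ P) (h𝒞 : IsChain (· ⊆ ·) (𝒞 : Set (Finset α))) : #𝒞 ≤ #P + 1 := by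
  have hinj : Set.InjOn card (𝒞 : Set (Finset α)) := fun s hs s' hs' h => by
    by_contra hne
    rcases h𝒞 hs hs' hne with h' | h'
    exacts [hne (eq_of_subset_of_card_le h' h.ge), hne (eq_of_subset_of_card_le h' h.le).symm]
  calc #𝒞 ≤ #(range (#P + 1)) := card_le_card_of_injOn card
        (fun s hs => mem_range.2 (Nat.lt_succ_of_le (card_le_card (hP s hs)))) hinj
    _ = #P + 1 := card_range _

noncomputable def typeOver {q : ℕ} (χ : Finset (ℝ × ℝ) → Fin q) (v : ℝ ×ₗ ℝ)
    (Q : Finset (ℝ ×ₗ ℝ)) (z : ℝ ×ₗ ℝ) : Fin q × Finset (ℝ ×ₗ ℝ) :=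
  (χ {ofLex v, ofLex z}, {x ∈ Q | 0 < orient (ofLex x) (ofLex v) (ofLex z)})

theorem card_image_typeOver_le {V : Finset (ℝ × ℝ)} (hV : GenPos V) {q : ℕ}
    (χ : Finset (ℝ × ℝ) → Fin q) {v : ℝ ×ₗ ℝ} (hv : ofLex v ∈ V) {Q : Finset (ℝ ×ₗ ℝ)}
    (hQ : ∀ x ∈ Q, x < v) {S : Finset (ℝ ×ₗ ℝ)} (hSV : ∀ s ∈ S, ofLex s ∈ V)
    (hvS : ∀ s ∈ S, v < s) : #(S.image (typeOver χ v Q)) ≤ q * (#Q + 1) := by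
  classical
  set pattern := fun z : ℝ ×ₗ ℝ => {x ∈ Q | 0 < orient (ofLex x) (ofLex v) (ofLex z)}
  -- around `v`, the half-planes to the left of the lines `x v` are nested
  have hmono : ∀ z ∈ S, ∀ z' ∈ S, 0 < orient (ofLex v) (ofLex z) (ofLex z') →
      pattern z ⊆ pattern z' := fun z hz z' hz' h x hx => by
    simp only [pattern, mem_filter] at hx ⊢
    exact ⟨hx.1, orient_pos_around_trans (hQ x hx.1) (hvS z hz) (hvS z' hz') hx.2 h⟩
  have hchain : IsChain (· ⊆ ·) ((S.image pattern : Finset _) : Set (Finset (ℝ ×ₗ ℝ))) := by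
    rintro _ h₁ _ h₂ hne
    obtain ⟨z, hz, rfl⟩ := mem_image.1 h₁
    obtain ⟨z', hz', rfl⟩ := mem_image.1 h₂
    have hzz' : z ≠ z' := fun h => hne (h ▸ rfl)
    rcases (hV.orient_ne_zero hv (hSV z hz) (hSV z' hz') (ofLex.injective.ne (hvS z hz).ne)
      (ofLex.injective.ne (hvS z' hz').ne) (ofLex.injective.ne hzz')).lt_or_gt with h | h
    · exact .inr (hmono z' hz' z hz (by rw [orient_swap]; linarith))
    · exact .inl (hmono z hz z' hz' h)
  calc #(S.image (typeOver χ v Q)) ≤ #((univ : Finset (Fin q)) ×ˢ S.image pattern) :=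
        card_le_card (image_subset_iff.2 fun z hz =>
          mem_product.2 ⟨mem_univ _, mem_image_of_mem pattern hz⟩)
    _ = q * #(S.image pattern) := by rw [card_product, card_univ, Fintype.card_fin]
    _ ≤ q * (#Q + 1) := Nat.mul_le_mul_left q (card_le_card_add_one_of_isChain
        (fun s hs => by obtain ⟨z, -, rfl⟩ := mem_image.1 hs; exact filter_subset _ _) hchain)

structure EndHomogeneous {q m : ℕ} (χ : Finset (ℝ × ℝ) → Fin q) (w : Fin m → ℝ × ℝ) :
    Prop where
  strictMono : StrictMono (toLex ∘ w)
  color_eq {i j k : Fin m} : i < j → i < k → χ {w i, w j} = χ {w i, w k}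
  orient_pos_iff {a b j k : Fin m} : a < b → b < j → b < k →
    (0 < orient (w a) (w b) (w j) ↔ 0 < orient (w a) (w b) (w k))

theorem exists_endHomogeneous {V : Finset (ℝ × ℝ)} (hV : GenPos V) {q : ℕ}
    (χ : Finset (ℝ × ℝ) → Fin q) {M : ℕ} (hqM : 0 < q * M) (hcard : (q * M + 1) ^ M ≤ #V) :
    ∃ w : Fin (M + 1) → ℝ × ℝ, (∀ i, w i ∈ V) ∧ EndHomogeneous χ w := by
  classical
  obtain ⟨A, hAV, hA, hhom⟩ := exists_isEndHomogeneous (t := typeOver χ)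
    (V := V.map toLex.toEmbedding) hqM
    (fun v hv Q S hS hQM hQ hvS => (card_image_typeOver_le hV χ (by simpa using hv) hQ
      (fun s hs => by simpa using hS hs) hvS).trans (Nat.mul_le_mul_left q hQM))
    (by simpa using hcard)
  set e := A.orderEmbOfFin hA
  have heA : ∀ i, e i ∈ A := A.orderEmbOfFin_mem hA
  refine ⟨fun i => ofLex (e i), fun i => by simpa using hAV (heA i),
    ⟨fun i j hij => e.strictMono hij, fun {i j k} hij hik => ?_, fun {a b j k} hab hbj hbk => ?_⟩⟩
  · exact congrArg Prod.fst
      (hhom _ (heA i) _ (heA j) _ (heA k) (e.strictMono hij) (e.strictMono hik))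
  · have h := congrArg Prod.snd
      (hhom _ (heA b) _ (heA j) _ (heA k) (e.strictMono hbj) (e.strictMono hbk))
    simpa [typeOver, heA, e.strictMono hab] using Finset.ext_iff.1 h (e a)

section Sequence

variable {V : Finset (ℝ × ℝ)} {q m : ℕ} {χ : Finset (ℝ × ℝ) → Fin q} {w : Fin m → ℝ × ℝ}

theorem EndHomogeneous.injective (hw : EndHomogeneous χ w) : Function.Injective w :=
  hw.strictMono.injective.of_comp

theorem EndHomogeneous.mul_orient_pos (hw : EndHomogeneous χ w) (hV : GenPos V)
    (hwV : ∀ i, w i ∈ V) {σ : ℝ} {a b j k : Fin m} (hab : a < b) (hbj : b < j) (hbk : b < k)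
    (h : 0 < σ * orient (w a) (w b) (w j)) : 0 < σ * orient (w a) (w b) (w k) := by
  have hiff := hw.orient_pos_iff hab hbj hbk
  rcases lt_trichotomy σ 0 with hσ | rfl | hσ
  · have hk : orient (w a) (w b) (w k) ≠ 0 :=
      hV.orient_ne_zero (hwV a) (hwV b) (hwV k) (hw.injective.ne hab.ne)
        (hw.injective.ne (hab.trans hbk).ne) (hw.injective.ne hbk.ne)
    refine mul_pos_of_neg_of_neg hσ (lt_of_le_of_ne (not_lt.1 fun hk' => ?_) hk)
    exact (neg_of_mul_pos_right h hσ.le).not_gt (hiff.2 hk')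
  · simp at h
  · exact mul_pos hσ (hiff.1 (pos_of_mul_pos_right h hσ.le))

end Sequence

theorem exists_convexPos_monochromatic_image {V : Finset (ℝ × ℝ)} {n q : ℕ}
    {χ : Finset (ℝ × ℝ) → Fin q} {p : Fin n → ℝ × ℝ} (hpV : ∀ i, p i ∈ V)
    (hp : Function.Injective p) {σ : ℝ}
    (horient : ∀ i j k, i < j → j < k → 0 < σ * orient (p i) (p j) (p k)) {c : Fin q}
    (hcolor : ∀ i j, i < j → χ {p i, p j} = c) :
    ∃ T ⊆ V, #T = n ∧ ConvexPos T ∧ ∃ c : Fin q, ∀ e ⊆ T, #e = 2 → χ e = c := by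
  classical
  refine ⟨univ.image p, fun x hx => ?_, by rw [card_image_of_injective _ hp, card_fin],
    convexPos_image hp horient, c, fun e he he2 => ?_⟩
  · obtain ⟨i, -, rfl⟩ := mem_image.1 hx
    exact hpV i
  · obtain ⟨x, y, hxy, rfl⟩ := card_eq_two.1 he2
    obtain ⟨i, -, rfl⟩ := mem_image.1 (he (mem_insert_self _ _))
    obtain ⟨j, -, rfl⟩ := mem_image.1 (he (mem_insert_of_mem (mem_singleton_self _)))
    rcases lt_trichotomy i j with h | rfl | h
    exacts [hcolor i j h, absurd rfl hxy, pair_comm (p i) (p j) ▸ hcolor j i h]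

theorem EndHomogeneous.exists_convexPos_monochromatic {V : Finset (ℝ × ℝ)} (hV : GenPos V)
    {n q M : ℕ} {χ : Finset (ℝ × ℝ) → Fin q} {w : Fin (M + 1) → ℝ × ℝ} (hwV : ∀ i, w i ∈ V)
    (hw : EndHomogeneous χ w) (hM : q * (n - 1) ^ 2 < M) :
    ∃ T ⊆ V, #T = n ∧ ConvexPos T ∧ ∃ c : Fin q, ∀ e ⊆ T, #e = 2 → χ e = c := by
  classical
  let L := Fin.last M
  obtain ⟨c, -, hc⟩ := exists_lt_card_fiber_of_mul_lt_card_of_maps_to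
    (s := univ) (f := fun i : Fin M => χ {w i.castSucc, w L}) (fun i _ => mem_univ _)
    (by simpa using hM)
  -- the orientation of `w a w b` with the last point is a transitive 2-colouring of the pairs
  let R : ℝ → Fin M → Fin M → Prop := fun σ a b =>
    0 < σ * orient (w a.castSucc) (w b.castSucc) (w L)
  have htrans : ∀ σ x y z, x < y → y < z → R σ x y → R σ y z → R σ x z :=
    fun σ x y z hxy hyz h₁ h₂ =>
      orient_pos_trans (hw.strictMono (Fin.castSucc_lt_castSucc_iff.2 hxy))
        (hw.strictMono (Fin.castSucc_lt_castSucc_iff.2 hyz))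
        (hw.strictMono (Fin.castSucc_lt_last z))
        (hw.mul_orient_pos hV hwV (Fin.castSucc_lt_castSucc_iff.2 hxy) (Fin.castSucc_lt_last y)
          (Fin.castSucc_lt_castSucc_iff.2 hyz) h₁) h₂
  have hcover : ∀ x y, x < y → R 1 x y ∨ R (-1) x y := fun x y hxy => by
    have := hV.orient_ne_zero (hwV _) (hwV _) (hwV L)
      (hw.injective.ne (Fin.castSucc_lt_castSucc_iff.2 hxy).ne)
      (hw.injective.ne (Fin.castSucc_lt_last x).ne) (hw.injective.ne (Fin.castSucc_lt_last y).ne)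
    rcases this.lt_or_gt with h | h
    · exact .inr (by simp only [R]; linarith)
    · exact .inl (by simp only [R]; linarith)
  obtain ⟨J, hJI, hJ, hJchain⟩ := exists_isAscChain_of_transitive (htrans 1) (htrans (-1)) hcover hc
  obtain ⟨σ, hσ⟩ : ∃ σ, IsAscChain (R σ) J := hJchain.elim (⟨1, ·⟩) (⟨-1, ·⟩)
  let u := J.orderEmbOfFin hJ
  have huJ : ∀ i, u i ∈ J := J.orderEmbOfFin_mem hJ
  have hu : ∀ {i j}, i < j → (u i).castSucc < (u j).castSucc := fun hij =>
    Fin.castSucc_lt_castSucc_iff.2 (u.strictMono hij)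
  refine exists_convexPos_monochromatic_image (p := fun i => w (u i).castSucc) (fun i => hwV _)
    (hw.injective.comp ((Fin.castSucc_injective M).comp u.injective)) (σ := σ)
    (fun i j k hij hjk => hw.mul_orient_pos hV hwV (hu hij) (Fin.castSucc_lt_last _) (hu hjk)
      (hσ _ (huJ i) _ (huJ j) (u.strictMono hij))) (c := c) fun i j hij => ?_
  rw [hw.color_eq (hu hij) (Fin.castSucc_lt_last _)]
  exact (mem_filter.1 (hJI (huJ i))).2

theorem mul_add_one_pow_le {n q : ℕ} (hn : 2 ≤ n) (hq : 1 ≤ q) :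
    (q * (q * ((n - 1) ^ 2 + 1)) + 1) ^ (q * ((n - 1) ^ 2 + 1)) ≤ (q * n) ^ (8 * q * n ^ 2) := by
  set M := q * ((n - 1) ^ 2 + 1)
  have hM : M ≤ q * n ^ 2 := Nat.mul_le_mul_left q (by
    obtain ⟨k, rfl⟩ : ∃ k, n = k + 1 := ⟨n - 1, by omega⟩
    simp only [Nat.add_sub_cancel]; nlinarith)
  have hqn : 2 ≤ q * n := by nlinarith
  calc (q * M + 1) ^ M ≤ ((q * n) ^ 4) ^ M := by
        refine Nat.pow_le_pow_left ?_ M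
        have h₁ : q * M ≤ (q * n) ^ 2 := by nlinarith
        have h₂ : 4 ≤ (q * n) ^ 2 := by nlinarith
        have h₃ : (q * n) ^ 4 = (q * n) ^ 2 * (q * n) ^ 2 := by ring
        nlinarith
    _ = (q * n) ^ (4 * M) := by rw [← pow_mul, mul_comm]
    _ ≤ (q * n) ^ (8 * q * n ^ 2) := Nat.pow_le_pow_right (by omega) (by nlinarith)

end GeomRamsey

open GeomRamsey

/-- Upper bound: `g(Kₙ; q) ≤ 2^(8 q n² log₂(q n)) = (q n)^(8 q n²)`. -/
theorem geom_ramsey_graph_upper (n q : ℕ) (hn : 2 ≤ n) (hq : 1 ≤ q) :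
    sInf {N | GeomRamseyProp n q N} ≤ (q * n) ^ (8 * q * n ^ 2) := by
  refine Nat.sInf_le fun V hV hgen χ => ?_
  obtain ⟨w, hwV, hw⟩ := exists_endHomogeneous hgen χ (M := q * ((n - 1) ^ 2 + 1))
    (by positivity) ((mul_add_one_pow_le hn hq).trans hV)
  exact hw.exists_convexPos_monochromatic hgen hwV (by nlinarith)
end

section
/- With the recursively constructed point set P_M and the function δ as defined, for any indices i₁ < i₂ < ... < i_n, one has δ(p_{i₁}, p_{i_n}) = max over 1 ≤ j ≤ n-1 of δ(p_{i_j}, p_{i_{j+1}}). -/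
/-!
`δ(p_i, p_j)` is the least `t` such that `i` and `j` lie in the same dyadic block of size `2^t`,
i.e. `i / 2^t = j / 2^t`. Because `k ↦ k / 2^t` is monotone, the endpoints of an increasing
chain of indices lie in a common block exactly when every consecutive pair does; hence the
level of the endpoints is at most `t` iff every consecutive level is at most `t`.
-/

/-- In the recursive point set `P_M` (with points indexed `0, …, 2^M - 1` by increasing
`x`-coordinate), the copies of `P_t` are exactly the blocks of `2^t` consecutive indices
starting at multiples of `2^t`, and the left/right halves of such a copy are its two
sub-blocks of size `2^(t-1)`.  So `p_i ∈ L` and `p_j ∈ R` for a common copy of `P_t`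
means: `t ≥ 1`, `i / 2^(t-1)` is even, and `j / 2^(t-1) = i / 2^(t-1) + 1`.
`deltaFn M i j` is the largest such `t` (with `t ≤ M`), i.e. the function `δ(p_i, p_j)`. -/
def deltaFn (M i j : ℕ) : ℕ :=
  Nat.findGreatest
    (fun t => 1 ≤ t ∧ i / 2 ^ (t - 1) % 2 = 0 ∧ j / 2 ^ (t - 1) = i / 2 ^ (t - 1) + 1) M

lemma Monotone.fin_zero_eq_last_iff {α : Type*} [PartialOrder α] {n : ℕ}
    {g : Fin (n + 1) → α} (hg : Monotone g) :
    g 0 = g (Fin.last n) ↔ ∀ j : Fin n, g j.castSucc = g j.succ := by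
  constructor
  · intro h j
    refine le_antisymm (hg Fin.castSucc_lt_succ.le) ?_
    calc g j.succ ≤ g (Fin.last n) := hg (Fin.le_last _)
      _ = g 0 := h.symm
      _ ≤ g j.castSucc := hg (Fin.zero_le _)
  · intro h
    exact (Fin.induction (motive := fun k => g k = g 0) rfl
      (fun j ih => (h j).symm.trans ih) (Fin.last n)).symm

lemma Nat.div_two_pow_eq_of_le {a b s t : ℕ} (hst : s ≤ t) (h : a / 2 ^ s = b / 2 ^ s) :
    a / 2 ^ t = b / 2 ^ t := by
  rw [← Nat.add_sub_cancel' hst, pow_add, ← Nat.div_div_eq_div_mul,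
    ← Nat.div_div_eq_div_mul, h]

lemma exists_div_two_pow_eq (a b : ℕ) : ∃ t, a / 2 ^ t = b / 2 ^ t :=
  ⟨a + b, by
    rw [Nat.div_eq_of_lt, Nat.div_eq_of_lt] <;>
      exact Nat.lt_two_pow_self.trans_le (Nat.pow_le_pow_right two_pos (by omega))⟩

def splitLevel (a b : ℕ) : ℕ := Nat.find (exists_div_two_pow_eq a b)

lemma splitLevel_le_iff {a b t : ℕ} : splitLevel a b ≤ t ↔ a / 2 ^ t = b / 2 ^ t := by
  rw [splitLevel, Nat.find_le_iff]
  exact ⟨fun ⟨s, hst, hs⟩ => Nat.div_two_pow_eq_of_le hst hs, fun h => ⟨t, le_rfl, h⟩⟩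

lemma splitLevel_le_of_lt_two_pow {a b M : ℕ} (ha : a < 2 ^ M) (hb : b < 2 ^ M) :
    splitLevel a b ≤ M := by
  rw [splitLevel_le_iff, Nat.div_eq_of_lt ha, Nat.div_eq_of_lt hb]

/-- For quotients `x ≤ y`, "`x ≠ y` but `x / 2 = y / 2`" means "`x` even and `y = x + 1`". -/
lemma deltaFn_condition_iff {a b : ℕ} (hab : a ≤ b) (t : ℕ) :
    (1 ≤ t ∧ a / 2 ^ (t - 1) % 2 = 0 ∧ b / 2 ^ (t - 1) = a / 2 ^ (t - 1) + 1) ↔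
      t ≠ 0 ∧ splitLevel a b = t := by
  rcases t with _ | t
  · simp
  have hle : a / 2 ^ t ≤ b / 2 ^ t := Nat.div_le_div_right hab
  have hsucc :
      splitLevel a b = t + 1 ↔ a / 2 ^ t / 2 = b / 2 ^ t / 2 ∧ a / 2 ^ t ≠ b / 2 ^ t := by
    rw [le_antisymm_iff, Nat.succ_le_iff, ← not_le, splitLevel_le_iff, splitLevel_le_iff,
      pow_succ, ← Nat.div_div_eq_div_mul, ← Nat.div_div_eq_div_mul]
  simp only [hsucc, Nat.add_sub_cancel]
  omega

lemma deltaFn_eq_splitLevel {M a b : ℕ} (hab : a ≤ b) (hb : b < 2 ^ M) :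
    deltaFn M a b = splitLevel a b := by
  rw [deltaFn, Nat.findGreatest_eq_iff]
  refine ⟨splitLevel_le_of_lt_two_pow (hab.trans_lt hb) hb,
    fun h => (deltaFn_condition_iff hab _).2 ⟨h, rfl⟩, fun k hk _ hP => ?_⟩
  exact hk.ne ((deltaFn_condition_iff hab k).1 hP).2

lemma splitLevel_zero_last_eq_sup {n : ℕ} {f : Fin (n + 1) → ℕ} (hf : Monotone f) :
    splitLevel (f 0) (f (Fin.last n)) =
      Finset.univ.sup (fun j : Fin n => splitLevel (f j.castSucc) (f j.succ)) := by
  refine eq_of_forall_ge_iff fun t => ?_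
  simp only [Finset.sup_le_iff, Finset.mem_univ, true_implies, splitLevel_le_iff]
  exact Monotone.fin_zero_eq_last_iff (g := fun k => f k / 2 ^ t)
    fun _ _ h => Nat.div_le_div_right (hf h)

theorem stepping_up_property_B_general (M n : ℕ) (f : Fin (n + 1) → ℕ)
    (hf : StrictMono f) (hbound : ∀ a, f a < 2 ^ M) :
    deltaFn M (f 0) (f (Fin.last n)) =
      Finset.univ.sup (fun j : Fin n => deltaFn M (f j.castSucc) (f j.succ)) := by
  rw [deltaFn_eq_splitLevel (hf.monotone (Fin.zero_le _)) (hbound _),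
    splitLevel_zero_last_eq_sup hf.monotone]
  refine Finset.sup_congr rfl fun j _ => ?_
  exact (deltaFn_eq_splitLevel (hf.monotone Fin.castSucc_lt_succ.le) (hbound _)).symm

/-- Property B of the stepping-up construction: for indices `i₁ < i₂ < ⋯ < i_{n+1}` of
points of `P_M`, `δ(p_{i₁}, p_{i_{n+1}})` equals the maximum of the consecutive values
`δ(p_{i_j}, p_{i_{j+1}})`. -/
theorem stepping_up_property_B (M n : ℕ) (f : Fin (n + 1) → ℕ)
    (hf : StrictMono f) (hbound : ∀ a, f a < 2 ^ M) (hn : 1 ≤ n) :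
    deltaFn M (f 0) (f (Fin.last n)) =
      Finset.univ.sup (fun j : Fin n => deltaFn M (f j.castSucc) (f j.succ)) :=
  stepping_up_property_B_general M n f hf hbound
end

section
/- Let N, q, t be positive integers and let (S_k) for k = 0, 1, ..., t be sets satisfying |S_0| = N and |S_{k+1}| ≥ (|S_k| - 1) / ((k+1) q). Then |S_t| ≥ N / (t! q^t) − t. In particular, if N = 2^{8 q n² log₂(q n)} and t = q n², then |S_t| ≥ 1. -/
/-- The recursive size estimate: if `|S₀| = N` and
`|S_{k+1}| ≥ (|S_k| - 1) / ((k+1) q)` for all `k < t`, then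
`|S_t| ≥ N / (t! qᵗ) - t`.  In particular, with `N = 2^(8 q n² log₂(q n)) = (qn)^(8qn²)`
and `t = q n²` one gets `|S_t| ≥ 1`. -/
theorem recursive_size_estimate (N q t n : ℕ) (hq : 1 ≤ q) (hn : 2 ≤ n)
    (a : ℕ → ℕ) (h0 : a 0 = N)
    (hrec : ∀ k, k < t → ((a k : ℝ) - 1) / (((k : ℝ) + 1) * q) ≤ (a (k + 1) : ℝ)) :
    (N : ℝ) / (Nat.factorial t * q ^ t) - t ≤ (a t : ℝ) ∧
    (t = q * n ^ 2 → N = (q * n) ^ (8 * q * n ^ 2) → 1 ≤ (a t : ℝ)) := by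
  have hq' : (1:ℝ) ≤ q := by exact_mod_cast hq
  have hq0 : (0:ℝ) < q := by linarith
  have key : ∀ k, k ≤ t → (N : ℝ) / (Nat.factorial k * q ^ k) - k ≤ (a k : ℝ) := by
    intro k
    induction k with
    | zero => intro _; simp [h0]
    | succ k ih =>
      intro hk
      have hk' : k < t := Nat.lt_of_succ_le hk
      have ih' := ih hk'.le
      have hr := hrec k hk'
      have hfpos : (0:ℝ) < Nat.factorial k * q ^ k := by positivity
      have hkq : (0:ℝ) < ((k:ℝ) + 1) * q := by positivity
      have h1 : ((N:ℝ) / (Nat.factorial k * q ^ k) - k - 1) / (((k:ℝ) + 1) * q)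
          ≤ ((a k : ℝ) - 1) / (((k:ℝ) + 1) * q) := by
        gcongr
      have heq : ((N:ℝ) / (Nat.factorial k * q ^ k) - k - 1) / (((k:ℝ) + 1) * q)
          = (N:ℝ) / (Nat.factorial (k+1) * q ^ (k+1)) - 1 / q := by
        rw [Nat.factorial_succ]
        push_cast
        field_simp
        ring
      have h2 : 1 / (q:ℝ) ≤ 1 := by
        rw [div_le_one hq0]; exact hq'
      push_cast
      rw [heq] at h1
      linarith
  refine ⟨key t le_rfl, ?_⟩
  intro ht hN
  have hqn : 2 ≤ q * n := le_trans hn (Nat.le_mul_of_pos_left n hq)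
  have ht1 : 1 ≤ t := by
    subst ht
    exact Nat.one_le_iff_ne_zero.mpr (by positivity)
  -- show (t+1) * (t! * q^t) ≤ N in ℕ
  have hnat : (t + 1) * (Nat.factorial t * q ^ t) ≤ N := by
    subst ht hN
    set m := q * n ^ 2 with hm
    calc (m + 1) * (Nat.factorial m * q ^ m)
        ≤ (q * n) ^ 3 * (m ^ m * q ^ m) := by
          apply Nat.mul_le_mul
          · -- m + 1 ≤ (q*n)^3
            have h1 : m + 1 ≤ 2 * (q * n ^ 2) := by omega
            have h2 : 2 * (q * n ^ 2) ≤ q ^ 3 * n ^ 3 := by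
              calc 2 * (q * n ^ 2) ≤ (q * q * n) * (q * n ^ 2) := by
                    apply Nat.mul_le_mul_right
                    calc 2 ≤ n := hn
                      _ ≤ q * q * n := Nat.le_mul_of_pos_left n (by positivity)
                _ = q ^ 3 * n ^ 3 := by ring
            calc m + 1 ≤ 2 * (q * n ^ 2) := h1
              _ ≤ q ^ 3 * n ^ 3 := h2
              _ = (q * n) ^ 3 := by ring
          · exact Nat.mul_le_mul_right _ (Nat.factorial_le_pow m)
      _ = (q * n) ^ 3 * ((q * n) ^ 2) ^ m := by
          rw [← Nat.mul_pow]
          congr 2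
          ring
      _ = (q * n) ^ (3 + 2 * m) := by rw [← pow_mul, ← pow_add]
      _ ≤ (q * n) ^ (8 * q * n ^ 2) := by
          apply Nat.pow_le_pow_right (by omega)
          have h8 : 8 * q * n ^ 2 = 8 * m := by rw [hm]; ring
          omega
  have hfq : (0:ℝ) < (Nat.factorial t : ℝ) * q ^ t := by positivity
  have hN' : ((t:ℝ) + 1) * ((Nat.factorial t : ℝ) * q ^ t) ≤ N := by
    exact_mod_cast hnat
  have h3 : (t:ℝ) + 1 ≤ (N:ℝ) / (Nat.factorial t * q ^ t) := by
    rw [le_div_iff₀ hfq]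
    exact hN'
  have := key t le_rfl
  linarith
end
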